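/- arXiv:2308.04759 — 7 statements merged into one kernel-verified Lean document; each statement's English description precedes it below -/
import Mathlib

section
/- Let G₁ be a Hamiltonian graph of odd order 2m+1 and let G₂ be a graph of order n containing a Hamiltonian path. Then G₁ × G₂ contains a cycle of length k for every integer k with 2m+1 ≤ k ≤ n(2m+1); in particular G₁ × G₂ is Hamiltonian. -/
open SimpleGraph

/-- The Cayley graph of an additive group with connection set `S`
(for `S` symmetric and not containing `0`, `u ~ v` iff `u - v ∈ S`). -/
def cayley {A : Type*} [AddGroup A] (S : Set A) : SimpleGraph A :=
  SimpleGraph.fromRel (fun u v => u - v ∈ S)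

/-- The Paley graph on a field `F`: `a ~ b` iff `a - b` is a nonzero square. -/
def paley (F : Type*) [Field F] : SimpleGraph F :=
  SimpleGraph.fromRel (fun a b => IsSquare (a - b))

/-- `G` contains a cycle of length `k`. -/
def hasCycleLength {V : Type*} (G : SimpleGraph V) (k : ℕ) : Prop :=
  ∃ (v : V) (w : G.Walk v v), w.IsCycle ∧ w.length = k

/-- A graph on a finite vertex type is pancyclic if it contains cycles of
all lengths from `3` to its order. -/
def Pancyclic {V : Type*} [Fintype V] (G : SimpleGraph V) : Prop :=
  ∀ k, 3 ≤ k → k ≤ Fintype.card V → hasCycleLength G k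

/-!
Let `c₀, …, c₂ₘ` be the Hamiltonian cycle of `G₁` and `p₀, …, pₙ₋₁` the Hamiltonian path of `G₂`.
The map `(i, j) ↦ (cᵢ, pⱼ)` embeds the cylinder `C₂ₘ₊₁ □ Pₙ`, drawn on `ℕ × ℕ` with columns `i`
and rows `j`, into `G₁ □ G₂`, so it suffices to find the cycles in the cylinder.
For `k = q (2m + 1) + 2t` with `t ≤ m`, go up column `0` through the rows `0, …, q - 1`, cross
row `q - 1` with `t` teeth reaching into row `q`, and snake back down through the rows
`q - 2, …, 0` over the columns `1, …, 2m`; the snake ends next to `(0, 0)`, either directly or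
across the seam of the cylinder. Teeth of height two on `q - 1` rows give the odd remainders
when `q ≥ 2`, and a `2 × w` rectangle gives the even lengths `2m + 2, …, 4m`.
-/

namespace List

variable {α β : Type*} {R : α → α → Prop} {S : β → β → Prop}

structure IsCyclicChain (R : α → α → Prop) (L : List α) : Prop where
  nodup : L.Nodup
  isChain : L.IsChain R
  rel_getLast_head : ∀ x ∈ L.getLast?, ∀ y ∈ L.head?, R x y

theorem IsCyclicChain.map {L : List α} (hL : L.IsCyclicChain R) {f : α → β}
    (hf : ∀ x ∈ L, ∀ y ∈ L, R x y → S (f x) (f y)) (hinj : ∀ x ∈ L, ∀ y ∈ L, f x = f y → x = y) :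
    (L.map f).IsCyclicChain S where
  nodup := hL.nodup.map_on hinj
  isChain := (isChain_map f).2 (hL.isChain.imp_of_mem_imp fun x y hx hy => hf x hx y hy)
  rel_getLast_head := by
    simp only [getLast?_map, head?_map, Option.mem_map]
    rintro _ ⟨x, hx, rfl⟩ _ ⟨y, hy, rfl⟩
    exact hf x (mem_of_getLast? hx) y (mem_of_mem_head? hy) (hL.rel_getLast_head x hx y hy)

theorem isChain_map_range' {f : ℕ → α} (hf : ∀ t, R (f t) (f (t + 1))) (a l : ℕ) :
    ((range' a l).map f).IsChain R :=
  (isChain_map f).2 ((isChain_range' a l 1).imp fun t _ h => by rw [h]; exact hf t)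

end List

theorem hasCycleLength_of_isCyclicChain {V : Type*} {G : SimpleGraph V} {L : List V}
    (hL : L.IsCyclicChain G.Adj) (h3 : 3 ≤ L.length) : hasCycleLength G L.length := by
  have hne : L ≠ [] := List.ne_nil_of_length_pos (by omega)
  have hclose : G.Adj (L.getLast hne) (L.head hne) :=
    hL.rel_getLast_head _ (List.getLast?_eq_some_getLast hne) _ (List.head?_eq_some_head hne)
  have hlen : (Walk.cons hclose (.ofSupport L hne hL.isChain)).length = L.length := by
    simp only [Walk.length_cons, Walk.length_ofSupport]; omega
  refine ⟨_, _, Walk.isCycle_iff_isPath_tail_and_le_length.2 ⟨?_, by omega⟩, hlen⟩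
  simpa [Walk.isPath_def] using hL.nodup

def CycleAdj (s i j : ℕ) : Prop :=
  i + 1 = j ∨ j + 1 = i ∨ (i + 1 = s ∧ j = 0) ∨ (j + 1 = s ∧ i = 0)

def CylinderAdj (s : ℕ) (x y : ℕ × ℕ) : Prop :=
  CycleAdj s x.1 y.1 ∧ x.2 = y.2 ∨ (x.2 + 1 = y.2 ∨ y.2 + 1 = x.2) ∧ x.1 = y.1

theorem CylinderAdj.symm {s : ℕ} {x y : ℕ × ℕ} (h : CylinderAdj s x y) : CylinderAdj s y x := by
  unfold CylinderAdj CycleAdj at *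
  omega

namespace Cylinder

variable {s : ℕ} {x : ℕ × ℕ}

def column (i j h : ℕ) : List (ℕ × ℕ) := (List.range' j (h + 1)).map (i, ·)

def row (w j : ℕ) (d : Bool) : List (ℕ × ℕ) :=
  if d then ((List.range' 1 w).map (·, j)).reverse else (List.range' 1 w).map (·, j)

def snake (w : ℕ) : ℕ → Bool → List (ℕ × ℕ)
  | 0, _ => []
  | j + 1, d => row w j d ++ snake w j (!d)

def comb (j : ℕ) : ℕ → List ℕ → List (ℕ × ℕ)
  | _, [] => []
  | c, h :: hs => column (c + 1) j h ++ (column (c + 2) j h).reverse ++ comb j (c + 2) hs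

def combCycle (m R : ℕ) (hs : List ℕ) : List (ℕ × ℕ) :=
  column 0 0 R ++ comb R 0 hs ++ snake (2 * m) R true

theorem mem_column {i j h : ℕ} : x ∈ column i j h ↔ x.1 = i ∧ j ≤ x.2 ∧ x.2 ≤ j + h := by
  obtain ⟨a, b⟩ := x
  simp only [column, List.mem_map, List.mem_range', Prod.mk.injEq]
  constructor
  · rintro ⟨t, ⟨k, hk, rfl⟩, rfl, rfl⟩; omega
  · rintro ⟨rfl, h1, h2⟩; exact ⟨b, ⟨b - j, by omega, by omega⟩, rfl, rfl⟩

theorem nodup_column (i j h : ℕ) : (column i j h).Nodup :=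
  List.Nodup.map (fun _ _ hab => (Prod.ext_iff.1 hab).2) List.nodup_range'

@[simp] theorem length_column (i j h : ℕ) : (column i j h).length = h + 1 := by simp [column]

@[simp] theorem head?_column (i j h : ℕ) : (column i j h).head? = some (i, j) := by
  simp [column, List.head?_range']

@[simp] theorem getLast?_column (i j h : ℕ) : (column i j h).getLast? = some (i, j + h) := by
  simp [column, List.getLast?_range']

theorem isChain_column (i j h : ℕ) : (column i j h).IsChain (CylinderAdj s) :=
  List.isChain_map_range' (R := CylinderAdj s) (fun _ => Or.inr ⟨Or.inl rfl, rfl⟩) _ _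

theorem mem_row {w j : ℕ} {d : Bool} : x ∈ row w j d ↔ 1 ≤ x.1 ∧ x.1 ≤ w ∧ x.2 = j := by
  obtain ⟨a, b⟩ := x
  have : (a, b) ∈ (List.range' 1 w).map (·, j) ↔ 1 ≤ a ∧ a ≤ w ∧ b = j := by
    simp only [List.mem_map, List.mem_range', Prod.mk.injEq]
    constructor
    · rintro ⟨t, ⟨k, hk, rfl⟩, rfl, rfl⟩; omega
    · rintro ⟨h1, h2, rfl⟩; exact ⟨a, ⟨a - 1, by omega, by omega⟩, rfl, rfl⟩
  cases d <;> simpa [row] using this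

theorem nodup_row (w j : ℕ) (d : Bool) : (row w j d).Nodup := by
  have : ((List.range' 1 w).map (·, j)).Nodup :=
    List.Nodup.map (fun _ _ hab => (Prod.ext_iff.1 hab).1) List.nodup_range'
  cases d <;> simpa [row] using this

@[simp] theorem length_row (w j : ℕ) (d : Bool) : (row w j d).length = w := by
  cases d <;> simp [row]

theorem head?_row {w : ℕ} (hw : 1 ≤ w) (j : ℕ) (d : Bool) :
    (row w j d).head? = some (if d then w else 1, j) := by
  obtain ⟨w, rfl⟩ : ∃ w', w = w' + 1 := ⟨w - 1, by omega⟩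
  cases d <;> simp [row, List.head?_range', List.getLast?_range']

theorem getLast?_row {w : ℕ} (hw : 1 ≤ w) (j : ℕ) (d : Bool) :
    (row w j d).getLast? = some (if d then 1 else w, j) := by
  obtain ⟨w, rfl⟩ : ∃ w', w = w' + 1 := ⟨w - 1, by omega⟩
  cases d <;> simp [row, List.head?_range', List.getLast?_range']

theorem isChain_row (w j : ℕ) (d : Bool) : (row w j d).IsChain (CylinderAdj s) := by
  have : ((List.range' 1 w).map (·, j)).IsChain (CylinderAdj s) :=
    List.isChain_map_range' (R := CylinderAdj s) (fun _ => Or.inl ⟨Or.inl rfl, rfl⟩) _ _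
  cases d
  · simpa [row] using this
  · simpa [row, List.isChain_reverse] using this.imp fun _ _ h => h.symm

theorem mem_snake {w R : ℕ} {d : Bool} (hx : x ∈ snake w R d) :
    1 ≤ x.1 ∧ x.1 ≤ w ∧ x.2 < R := by
  induction R generalizing d with
  | zero => simp [snake] at hx
  | succ R ih =>
    rcases List.mem_append.1 hx with hx | hx
    · have := mem_row.1 hx; omega
    · have := ih hx; omega

theorem nodup_snake (w R : ℕ) (d : Bool) : (snake w R d).Nodup := by
  induction R generalizing d with
  | zero => simp [snake]
  | succ R ih =>
    refine List.nodup_append.2 ⟨nodup_row w R d, ih _, fun x hx y hy hxy => ?_⟩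
    have := (mem_row.1 hx).2.2
    have := (mem_snake hy).2.2
    subst hxy; omega

@[simp] theorem length_snake (w R : ℕ) (d : Bool) : (snake w R d).length = R * w := by
  induction R generalizing d with
  | zero => simp [snake]
  | succ R ih => rw [snake, List.length_append, length_row, ih, Nat.succ_mul, Nat.add_comm]

theorem head?_snake {w : ℕ} (hw : 1 ≤ w) (R : ℕ) (d : Bool) :
    (snake w (R + 1) d).head? = some (if d then w else 1, R) := by
  simp [snake, List.head?_append, head?_row hw]

theorem isChain_snake {w : ℕ} (hw : 1 ≤ w) (R : ℕ) (d : Bool) :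
    (snake w R d).IsChain (CylinderAdj s) := by
  induction R generalizing d with
  | zero => simp [snake]
  | succ R ih =>
    refine (isChain_row w R d).append (ih _) ?_
    cases R with
    | zero => simp [snake]
    | succ R =>
      simp only [getLast?_row hw, head?_snake hw, Option.mem_def, Option.some.injEq]
      rintro _ rfl _ rfl
      cases d <;> exact Or.inr ⟨Or.inr rfl, by simp⟩

theorem getLast?_snake {w : ℕ} (hw : 1 ≤ w) (R : ℕ) (d : Bool) :
    ∀ x ∈ (snake w (R + 1) d).getLast?, x.2 = 0 ∧ (x.1 = 1 ∨ x.1 = w) := by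
  induction R generalizing d with
  | zero => cases d <;> simp [snake, getLast?_row hw]
  | succ R ih =>
    have hne : snake w (R + 1) (!d) ≠ [] :=
      List.ne_nil_of_length_pos (by rw [length_snake]; exact Nat.mul_pos (by omega) hw)
    rw [snake, List.getLast?_append_of_ne_nil _ hne]
    exact ih _

theorem isCyclicChain_snake_two {w : ℕ} (hw : 1 ≤ w) :
    (snake w 2 true).IsCyclicChain (CylinderAdj s) where
  nodup := nodup_snake w 2 true
  isChain := isChain_snake hw 2 true
  rel_getLast_head := by
    simp only [snake, List.append_nil, List.getLast?_append, getLast?_row hw, List.head?_append,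
      head?_row hw, Option.some_or, Option.mem_def, Option.some.injEq]
    rintro _ rfl _ rfl
    exact Or.inr ⟨Or.inl rfl, by simp⟩

theorem mem_comb {j c : ℕ} {hs : List ℕ} (hx : x ∈ comb j c hs) :
    c < x.1 ∧ x.1 ≤ c + 2 * hs.length ∧ j ≤ x.2 ∧ ∃ h ∈ hs, x.2 ≤ j + h := by
  induction hs generalizing c with
  | nil => simp [comb] at hx
  | cons h hs ih =>
    simp only [comb, List.mem_append, List.mem_reverse, mem_column] at hx
    simp only [List.length_cons, List.mem_cons, exists_eq_or_imp]
    rcases hx with (hx | hx) | hx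
    · omega
    · omega
    · obtain ⟨h1, h2, h3, h', hh', h4⟩ := ih hx
      exact ⟨by omega, by omega, h3, Or.inr ⟨h', hh', h4⟩⟩

theorem nodup_comb (j c : ℕ) (hs : List ℕ) : (comb j c hs).Nodup := by
  induction hs generalizing c with
  | nil => simp [comb]
  | cons h hs ih =>
    simp only [comb, List.nodup_append, List.nodup_reverse, List.mem_append, List.mem_reverse]
    refine ⟨⟨nodup_column _ _ _, nodup_column _ _ _, fun x hx y hy hxy => ?_⟩, ih _,
      fun x hx y hy hxy => ?_⟩
    · have := (mem_column.1 hx).1; have := (mem_column.1 hy).1; subst hxy; omega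
    · have := (mem_comb hy).1
      rcases hx with hx | hx <;> have := (mem_column.1 hx).1 <;> subst hxy <;> omega

@[simp] theorem length_comb (j c : ℕ) (hs : List ℕ) :
    (comb j c hs).length = 2 * hs.length + 2 * hs.sum := by
  induction hs generalizing c with
  | nil => simp [comb]
  | cons h hs ih =>
    simp only [comb, List.length_append, List.length_reverse, length_column, ih,
      List.length_cons, List.sum_cons]
    ring

theorem head?_comb (j c h : ℕ) (hs : List ℕ) : (comb j c (h :: hs)).head? = some (c + 1, j) := by
  simp [comb, List.head?_append]

theorem getLast?_comb (j c : ℕ) {hs : List ℕ} (hs0 : hs ≠ []) :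
    (comb j c hs).getLast? = some (c + 2 * hs.length, j) := by
  induction hs generalizing c with
  | nil => exact absurd rfl hs0
  | cons h hs ih =>
    cases hs with
    | nil => simp [comb]
    | cons h' hs =>
      rw [comb, List.getLast?_append_of_ne_nil _ (List.ne_nil_of_mem (List.mem_of_mem_head?
        (head?_comb j (c + 2) h' hs))), ih _ (List.cons_ne_nil _ _)]
      simp only [List.length_cons]
      congr 2
      ring

theorem isChain_comb (j c : ℕ) (hs : List ℕ) : (comb j c hs).IsChain (CylinderAdj s) := by
  induction hs generalizing c with
  | nil => simp [comb]
  | cons h hs ih =>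
    have htooth : (column (c + 1) j h ++ (column (c + 2) j h).reverse).IsChain (CylinderAdj s) := by
      refine (isChain_column _ _ _).append ?_ ?_
      · simpa [List.isChain_reverse] using (isChain_column (s := s) _ _ _).imp fun _ _ h => h.symm
      · simp only [getLast?_column, List.head?_reverse, Option.mem_def, Option.some.injEq]
        rintro _ rfl _ rfl
        exact Or.inl ⟨Or.inl rfl, rfl⟩
    refine htooth.append (ih _) ?_
    cases hs with
    | nil => simp [comb]
    | cons h' hs =>
      simp only [List.getLast?_append, List.getLast?_reverse, head?_column, head?_comb,
        Option.some_or, Option.mem_def, Option.some.injEq]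
      rintro _ rfl _ rfl
      exact Or.inl ⟨Or.inl rfl, rfl⟩

variable {m R : ℕ} {hs : List ℕ}

theorem length_combCycle (hlen : hs.length = m) :
    (combCycle m R hs).length = (R + 1) * (2 * m + 1) + 2 * hs.sum := by
  simp only [combCycle, List.length_append, length_column, length_comb, length_snake, hlen]
  ring

theorem mem_combCycle {n : ℕ} (hlen : hs.length = m) (hn : ∀ h ∈ hs, R + h < n) (hR : R < n)
    (hx : x ∈ combCycle m R hs) : x.1 < 2 * m + 1 ∧ x.2 < n := by
  simp only [combCycle, List.mem_append] at hx
  rcases hx with (hx | hx) | hx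
  · have := mem_column.1 hx; omega
  · obtain ⟨-, h2, -, h, hh, h4⟩ := mem_comb hx
    have := hn h hh; omega
  · have := mem_snake hx; omega

theorem isCyclicChain_combCycle (hm : 1 ≤ m) (hlen : hs.length = m) :
    (combCycle m R hs).IsCyclicChain (CylinderAdj (2 * m + 1)) := by
  obtain ⟨h, hs, rfl⟩ := List.exists_cons_of_length_pos (by omega : 0 < hs.length)
  have hw : 1 ≤ 2 * m := by omega
  have hcomb : (column 0 0 R ++ comb R 0 (h :: hs)).getLast? = some (2 * m, R) := by
    simp [List.getLast?_append, getLast?_comb, hlen]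
  refine ⟨?_, ?_, ?_⟩
  · simp only [combCycle, List.nodup_append, List.mem_append]
    refine ⟨⟨nodup_column _ _ _, nodup_comb _ _ _, fun x hx y hy hxy => ?_⟩, nodup_snake _ _ _,
      fun x hx y hy hxy => ?_⟩
    · have := (mem_column.1 hx).1; have := (mem_comb hy).1; subst hxy; omega
    · have := mem_snake hy
      subst hxy
      rcases hx with hx | hx
      · have := mem_column.1 hx; omega
      · have := (mem_comb hx).2.2.1; omega
  · refine ((isChain_column _ _ _).append (isChain_comb _ _ _) ?_).append
      (isChain_snake hw _ _) ?_
    · simp only [getLast?_column, head?_comb, Option.mem_def, Option.some.injEq]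
      rintro _ rfl _ rfl
      exact Or.inl ⟨Or.inl rfl, by simp⟩
    · cases R with
      | zero => simp [snake]
      | succ R =>
        simp only [hcomb, head?_snake hw, Option.mem_def, Option.some.injEq]
        rintro _ rfl _ rfl
        exact Or.inr ⟨Or.inr rfl, rfl⟩
  · have hhead : (combCycle m R (h :: hs)).head? = some (0, 0) := by
      simp [combCycle, List.head?_append]
    simp only [hhead, Option.mem_def, Option.some.injEq]
    rintro x hx _ rfl
    cases R with
    | zero =>
      simp only [combCycle, snake, List.append_nil, hcomb, Option.some.injEq] at hx
      subst hx
      exact Or.inl ⟨Or.inr (Or.inr (Or.inl ⟨rfl, rfl⟩)), rfl⟩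
    | succ R =>
      rw [combCycle, List.getLast?_append_of_ne_nil _ (List.ne_nil_of_mem
        (List.mem_of_mem_head? (head?_snake hw R true)))] at hx
      have := getLast?_snake hw R true x hx
      unfold CylinderAdj CycleAdj
      omega

end Cylinder

open Cylinder in
theorem exists_isCyclicChain_cylinderAdj {m n k : ℕ} (hm : 1 ≤ m) (hk : 2 * m + 1 ≤ k)
    (hkn : k ≤ n * (2 * m + 1)) :
    ∃ L : List (ℕ × ℕ), L.IsCyclicChain (CylinderAdj (2 * m + 1)) ∧ L.length = k ∧
      ∀ x ∈ L, x.1 < 2 * m + 1 ∧ x.2 < n := by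
  obtain ⟨q, r, hr, rfl⟩ : ∃ q r, r < 2 * m + 1 ∧ k = q * (2 * m + 1) + r :=
    ⟨k / (2 * m + 1), k % (2 * m + 1), Nat.mod_lt _ (by omega), by rw [Nat.div_add_mod']⟩
  have hqn : q < n ∨ (q = n ∧ r = 0) := by
    rcases lt_or_ge q n with h | h
    · exact Or.inl h
    · have : q * (2 * m + 1) ≤ n * (2 * m + 1) := by omega
      obtain rfl : q = n := le_antisymm (Nat.le_of_mul_le_mul_right this (by omega)) h
      omega
  obtain ⟨Q, rfl⟩ : ∃ Q, q = Q + 1 := ⟨q - 1, by rcases q with _ | q <;> omega⟩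
  rcases Nat.even_or_odd r with ⟨a, rfl⟩ | ⟨a, rfl⟩
  · let hs := List.replicate a 1 ++ List.replicate (m - a) 0
    have hlen : hs.length = m := by
      simp only [hs, List.length_append, List.length_replicate]; omega
    have hsum : hs.sum = a := by simp [hs]
    refine ⟨combCycle m Q hs, isCyclicChain_combCycle hm hlen, ?_,
      fun x hx => mem_combCycle hlen ?_ (by omega) hx⟩
    · rw [length_combCycle hlen, hsum]; ring
    · intro h hh
      simp only [hs, List.mem_append, List.mem_replicate] at hh
      omega
  · rcases Q with _ | Q
    · refine ⟨snake (m + a + 1) 2 true, isCyclicChain_snake_two (by omega),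
      by rw [length_snake]; ring, ?_⟩
      intro x hx; have := mem_snake hx; omega
    · let hs := List.replicate (a + 1) 2 ++ List.replicate (m - (a + 1)) 1
      have hlen : hs.length = m := by
        simp only [hs, List.length_append, List.length_replicate]; omega
      have hsum : hs.sum = m + a + 1 := by
        simp only [hs, List.sum_append, List.sum_replicate, smul_eq_mul, mul_one]; omega
      refine ⟨combCycle m Q hs, isCyclicChain_combCycle hm hlen, ?_,
        fun x hx => mem_combCycle hlen ?_ (by omega) hx⟩
      · rw [length_combCycle hlen, hsum]; ring
      · intro h hh
        simp only [hs, List.mem_append, List.mem_replicate] at hh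
        omega

section BoxProd

variable {V₁ V₂ : Type*} {G₁ : SimpleGraph V₁} {G₂ : SimpleGraph V₂} {u : V₁} {v w : V₂}

theorem SimpleGraph.Walk.adj_getVert_of_cycleAdj (c : G₁.Walk u u) {i j : ℕ}
    (hi : i < c.length) (hj : j < c.length) (h : CycleAdj c.length i j) :
    G₁.Adj (c.getVert i) (c.getVert j) := by
  have hwrap : c.getVert c.length = c.getVert 0 := by simp
  rcases h with rfl | rfl | ⟨h, rfl⟩ | ⟨h, rfl⟩
  · exact c.adj_getVert_succ hi
  · exact (c.adj_getVert_succ hj).symm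
  · simpa [h, hwrap] using c.adj_getVert_succ hi
  · simpa [h, hwrap] using (c.adj_getVert_succ hj).symm

theorem SimpleGraph.Walk.adj_getVert_of_consecutive (p : G₂.Walk v w) {i j : ℕ}
    (hi : i ≤ p.length) (hj : j ≤ p.length) (h : i + 1 = j ∨ j + 1 = i) :
    G₂.Adj (p.getVert i) (p.getVert j) := by
  rcases h with rfl | rfl
  · exact p.adj_getVert_succ (by omega)
  · exact (p.adj_getVert_succ (by omega)).symm

theorem hasCycleLength_boxProd_of_isCyclicChain {c : G₁.Walk u u} (hc : c.IsCycle)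
    {p : G₂.Walk v w} (hp : p.IsPath) {L : List (ℕ × ℕ)}
    (hL : L.IsCyclicChain (CylinderAdj c.length)) (h3 : 3 ≤ L.length)
    (hbox : ∀ x ∈ L, x.1 < c.length ∧ x.2 < p.length + 1) :
    hasCycleLength (G₁ □ G₂) L.length := by
  have hmap := hL.map (S := (G₁ □ G₂).Adj) (f := fun x => (c.getVert x.1, p.getVert x.2))
    (fun x hx y hy hxy => ?_) (fun x hx y hy hxy => ?_)
  · simpa using hasCycleLength_of_isCyclicChain hmap (by simpa using h3)
  · have := hbox x hx; have := hbox y hy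
    rw [boxProd_adj]
    exact hxy.imp
      (fun ⟨h1, h2⟩ => ⟨c.adj_getVert_of_cycleAdj (by omega) (by omega) h1, by rw [h2]⟩)
      fun ⟨h2, h1⟩ => ⟨p.adj_getVert_of_consecutive (by omega) (by omega) h2, by rw [h1]⟩
  · have := hbox x hx; have := hbox y hy
    simp only [Prod.mk.injEq] at hxy
    exact Prod.ext (hc.getVert_injOn' (show x.1 ≤ c.length - 1 by omega)
      (show y.1 ≤ c.length - 1 by omega) hxy.1)
      (hp.getVert_injOn (show x.2 ≤ p.length by omega) (show y.2 ≤ p.length by omega) hxy.2)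

end BoxProd

theorem stmt3 {V₁ V₂ : Type*} [Fintype V₁] [Fintype V₂] [DecidableEq V₁] [DecidableEq V₂]
    (m n : ℕ) (G₁ : SimpleGraph V₁) (G₂ : SimpleGraph V₂)
    (h₁ : Fintype.card V₁ = 2 * m + 1) (h₂ : Fintype.card V₂ = n)
    (hham : ∃ (v : V₁) (w : G₁.Walk v v), w.IsHamiltonianCycle)
    (hpath : ∃ (u v : V₂) (p : G₂.Walk u v), p.IsHamiltonian) :
    (∀ k, 2 * m + 1 ≤ k → k ≤ n * (2 * m + 1) → hasCycleLength (G₁ □ G₂) k) ∧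
    ∃ (v : V₁ × V₂) (w : (G₁ □ G₂).Walk v v), w.IsHamiltonianCycle := by
  obtain ⟨_, c, hc⟩ := hham
  obtain ⟨u, _, p, hp⟩ := hpath
  have hclen : c.length = 2 * m + 1 := by rw [hc.length_eq, h₁]
  have hplen : p.length + 1 = n := by
    rw [hp.length_eq, ← h₂, Nat.sub_add_cancel (Fintype.card_pos_iff.2 ⟨u⟩)]
  have hm : 1 ≤ m := by have := hc.isCycle.three_le_length; omega
  have hcycles : ∀ k, 2 * m + 1 ≤ k → k ≤ n * (2 * m + 1) → hasCycleLength (G₁ □ G₂) k := by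
    intro k hk hkn
    obtain ⟨L, hL, rfl, hbox⟩ := exists_isCyclicChain_cylinderAdj hm hk hkn
    rw [← hclen] at hL
    exact hasCycleLength_boxProd_of_isCyclicChain hc.isCycle hp.isPath hL (by omega)
      (by rwa [hclen, hplen])
  refine ⟨hcycles, ?_⟩
  obtain ⟨v, w, hw, hwlen⟩ :=
    hcycles (n * (2 * m + 1)) (Nat.le_mul_of_pos_left _ (by omega)) le_rfl
  refine ⟨v, w, Walk.isHamiltonianCycle_iff_isCycle_and_length_eq.2 ⟨hw, ?_⟩⟩
  rw [hwlen, Fintype.card_prod, h₁, h₂, mul_comm]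
end

section
/- Let G₁ be a pancyclic graph of odd order and G₂ a graph containing a Hamiltonian path. Then the Cartesian product G₁ × G₂ is pancyclic. -/
open SimpleGraph

/-!
G₁ has a Hamiltonian cycle `c 0, …, c (m - 1)` with `m` odd and G₂ a Hamiltonian path
`p 0, …, p (n - 1)`, so `G₁ □ G₂` contains the `m × n` grid `(c a, p b)` together with the
wrap-around edges from `(c (m - 1), p b)` to `(c 0, p b)`. Cycles of length at most `m` lie in one
copy of G₁. For longer ones we build, by induction on `r` adding two rows at a time, grid paths
from `(0, 0)` to `(m - 1, 0)` in `[0, m) × [0, r)` of every even length `L` with `m - 1 ≤ L < m r`.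
A path of length `k - 1` closed by the wrap-around edge is a cycle of odd length `k`; a path in the
rows above row `0`, closed through row `0`, is a cycle of even length `k`.
-/

lemma hasCycleLength.map {V W : Type*} {G : SimpleGraph V} {H : SimpleGraph W} {k : ℕ}
    (h : hasCycleLength G k) (φ : G ↪g H) : hasCycleLength H k := by
  obtain ⟨v, c, hc, rfl⟩ := h
  exact ⟨_, c.map φ.toHom, hc.map φ.injective, c.length_map _⟩

namespace SimpleGraph

variable {V : Type*} {G : SimpleGraph V}

structure IsPathSeq (G : SimpleGraph V) (f : ℕ → V) (n : ℕ) : Prop where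
  injOn : Set.InjOn f (Set.Iio n)
  adj : ∀ i, i + 1 < n → G.Adj (f i) (f (i + 1))

lemma hasCycleLength_of_isPathSeq {f : ℕ → V} {k : ℕ} (hf : G.IsPathSeq f k) (hk : 3 ≤ k)
    (hclose : G.Adj (f (k - 1)) (f 0)) : hasCycleLength G k := by
  have hne : (List.range k).map f ≠ [] := by simp; omega
  have hchain : ((List.range k).map f).IsChain G.Adj := by
    rw [List.isChain_map, List.isChain_range]
    exact fun i hi => hf.adj i (by omega)
  have hhead : ((List.range k).map f).head hne = f 0 := by
    simp [List.head_map, List.head_range]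
  have hlast : ((List.range k).map f).getLast hne = f (k - 1) := by
    simp [List.getLast_map, List.getLast_range]
  let P := (Walk.ofSupport _ hne hchain).copy hhead hlast
  have hPlen : P.length = k - 1 := by simp [P]
  have hP : P.IsPath := by
    refine Walk.IsPath.mk' ?_
    simp only [P, Walk.support_copy, Walk.support_ofSupport]
    exact List.Nodup.map_on (fun i hi j hj => hf.injOn (by simpa using hi) (by simpa using hj))
      List.nodup_range
  have hlen : (Walk.cons hclose P).length = k := by
    rw [Walk.length_cons, hPlen]
    omega
  refine ⟨_, Walk.cons hclose P, ?_, hlen⟩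
  rw [Walk.isCycle_iff_isPath_tail_and_le_length, hlen]
  exact ⟨by simpa using hP, hk⟩

lemma IsPathSeq.adj_of_hasse_adj {f : ℕ → V} {n a b : ℕ} (h : G.IsPathSeq f n)
    (hab : (hasse ℕ).Adj a b) (ha : a < n) (hb : b < n) : G.Adj (f a) (f b) := by
  rcases hasse_adj.mp hab with hab | hab <;> rw [Nat.covBy_iff_add_one_eq] at hab <;> subst hab
  · exact h.adj a hb
  · exact (h.adj b ha).symm

lemma Walk.IsPath.isPathSeq {u v : V} {P : G.Walk u v} (hP : P.IsPath) :
    G.IsPathSeq P.getVert (P.length + 1) :=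
  ⟨fun i hi j hj => hP.getVert_injOn (by simp at hi ⊢; omega) (by simp at hj ⊢; omega),
    fun i hi => P.adj_getVert_succ (by omega)⟩

lemma Walk.IsCycle.isPathSeq {u : V} {C : G.Walk u u} (hC : C.IsCycle) :
    G.IsPathSeq C.getVert C.length :=
  ⟨fun i hi j hj => hC.getVert_injOn' (by simp at hi ⊢; omega) (by simp at hj ⊢; omega),
    fun i hi => C.adj_getVert_succ (by omega)⟩

lemma Walk.IsCycle.adj_getVert_last {u : V} {C : G.Walk u u} (hC : C.IsCycle) :
    G.Adj (C.getVert (C.length - 1)) (C.getVert 0) := by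
  have h3 := hC.three_le_length
  have h := C.adj_getVert_succ (i := C.length - 1) (by omega)
  rw [Walk.getVert_zero]
  rwa [Nat.sub_add_cancel (by omega), Walk.getVert_length] at h

lemma hasse_nat_prod_adj {a b : ℕ × ℕ} :
    (hasse (ℕ × ℕ)).Adj a b ↔ (a.2 = b.2 ∧ (b.1 = a.1 + 1 ∨ a.1 = b.1 + 1)) ∨
      (a.1 = b.1 ∧ (b.2 = a.2 + 1 ∨ a.2 = b.2 + 1)) := by
  simp only [hasse_prod, boxProd_adj, hasse_adj, Nat.covBy_iff_add_one_eq]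
  omega

structure IsGridPath (m r L : ℕ) (g : ℕ → ℕ × ℕ) : Prop where
  isPathSeq : (hasse (ℕ × ℕ)).IsPathSeq g (L + 1)
  mapsTo : Set.MapsTo g (Set.Iio (L + 1)) (Set.Iio m ×ˢ Set.Iio r)
  first : g 0 = (0, 0)
  last : g L = (m - 1, 0)

-- A square wave over the columns `0, …, 2j - 1` between rows `0` and `1`, then straight on.
lemma isGridPath_zigzag {m r j : ℕ} (hj : 2 * j < m) (hr : 2 ≤ r) :
    IsGridPath m r (m - 1 + 2 * j) fun i =>
      if i < 4 * j then (i / 2, if i % 4 = 1 ∨ i % 4 = 2 then 1 else 0) else (i - 2 * j, 0) := by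
  refine ⟨⟨fun i hi i' hi' h => ?_, fun i hi => ?_⟩, fun i hi => ?_, ?_, ?_⟩
  · simp only [Set.mem_Iio] at hi hi'
    split_ifs at h <;> simp only [Prod.mk.injEq] at h <;> omega
  · rw [hasse_nat_prod_adj]
    split_ifs <;> omega
  · simp only [Set.mem_Iio, Set.mem_prod] at hi ⊢
    split_ifs <;> omega
  · simp
  · rw [if_neg (by omega), Prod.mk.injEq]
    omega

lemma isGridPath_straight {m r : ℕ} (hm : 0 < m) (hr : 0 < r) :
    IsGridPath m r (m - 1) fun i => (i, 0) := by
  refine ⟨⟨fun i _ i' _ h => congrArg Prod.fst h, fun i _ => ?_⟩, fun i hi => ?_, rfl, rfl⟩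
  · simp
  · simp only [Set.mem_Iio, Set.mem_prod] at hi ⊢
    omega

-- From `(0, 0)` up to the old path moved up two rows, then back along row `1` to column `m - d`
-- and along row `0` to `(m - 1, 0)`.
lemma IsGridPath.addTwoRowsBelow {m r L d : ℕ} {g : ℕ → ℕ × ℕ} (h : IsGridPath m r L g)
    (hd : 0 < d) (hdm : d < m) :
    IsGridPath m (r + 2) (L + 2 + 2 * d) fun i =>
      if i < 2 then (0, i)
      else if i ≤ L + 2 then ((g (i - 2)).1, (g (i - 2)).2 + 2)
      else if i ≤ L + 2 + d then (L + 2 + m - i, 1)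
      else (i + m - L - 3 - 2 * d, 0) := by
  have hfirst : (g 0).1 = 0 ∧ (g 0).2 = 0 := Prod.ext_iff.mp h.first
  have hlast : (g L).1 = m - 1 ∧ (g L).2 = 0 := Prod.ext_iff.mp h.last
  have hL : 0 < L := by
    by_contra hL0
    simp only [show L = 0 by omega] at hlast
    omega
  have hbox : ∀ j ≤ L, (g j).1 < m ∧ (g j).2 < r := fun j hj => h.mapsTo (by simp; omega)
  refine ⟨⟨fun i hi i' hi' he => ?_, fun i hi => ?_⟩, fun i hi => ?_, ?_, ?_⟩
  · simp only [Set.mem_Iio] at hi hi'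
    split_ifs at he <;> simp only [Prod.mk.injEq] at he <;> try omega
    have := h.isPathSeq.injOn (x₁ := i - 2) (x₂ := i' - 2) (by simp; omega) (by simp; omega)
      (Prod.ext he.1 (by omega))
    omega
  · rw [hasse_nat_prod_adj]
    rcases Nat.lt_or_ge i 2 with hi2 | hi2
    · interval_cases i <;> simp_all
    rcases Nat.lt_or_ge i (L + 2) with hiL | hiL
    · obtain ⟨j, rfl⟩ : ∃ j, i = j + 2 := ⟨i - 2, by omega⟩
      have := hasse_nat_prod_adj.mp (h.isPathSeq.adj j (by omega))
      simp only [show j + 2 + 1 - 2 = j + 1 by omega, Nat.add_sub_cancel]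
      split_ifs <;> omega
    rcases hiL.eq_or_lt with rfl | hiL
    · split_ifs <;> simp only [Nat.add_sub_cancel] <;> omega
    · split_ifs <;> omega
  · simp only [Set.mem_Iio, Set.mem_prod] at hi ⊢
    split_ifs <;> try omega
    have := hbox (i - 2) (by omega)
    omega
  · simp
  · rw [if_neg (by omega), if_neg (by omega), if_neg (by omega)]
    simp only [Prod.mk.injEq, and_true]
    omega

lemma exists_isGridPath {m r L : ℕ} (hm : 3 ≤ m) (hodd : Odd m) (hL : Even L) (hmL : m - 1 ≤ L)
    (hLr : L < m * r) : ∃ g, IsGridPath m r L g := by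
  have hm2 := Nat.odd_iff.mp hodd
  induction r using Nat.strong_induction_on generalizing L with
  | _ r ih =>
  have hL2 := Nat.even_iff.mp hL
  rcases r with _ | _ | r
  · simp at hLr
  · rw [show L = m - 1 by omega]
    exact ⟨_, isGridPath_straight (by omega) one_pos⟩
  rw [show m * (r + 1 + 1) = m * r + 2 * m by ring] at hLr
  rcases Nat.lt_or_ge L (2 * m) with hL2m | hL2m
  · rcases hmL.eq_or_lt with rfl | hmL
    · exact ⟨_, isGridPath_straight (by omega) (by omega)⟩
    rw [show L = m - 1 + 2 * ((L + 1 - m) / 2) by omega]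
    exact ⟨_, isGridPath_zigzag (by omega) (by omega)⟩
  have hr : 0 < r := Nat.pos_of_ne_zero (by rintro rfl; omega)
  rcases Nat.lt_or_ge L (3 * m - 1) with hL3m | hL3m
  · rw [show L = m - 1 + 2 + 2 * ((L - m - 1) / 2) by omega]
    exact ⟨_, (isGridPath_straight (by omega) hr).addTwoRowsBelow (by omega) (by omega)⟩
  · obtain ⟨g, hg⟩ := ih r (by omega) (L := L - 2 * m) (Nat.even_iff.mpr (by omega)) (by omega)
      (by omega)
    rw [show L = L - 2 * m + 2 + 2 * (m - 1) by omega]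
    exact ⟨_, hg.addTwoRowsBelow (by omega) (by omega)⟩

structure IsGridCycle (m n k : ℕ) (g : ℕ → ℕ × ℕ) : Prop where
  isPathSeq : (hasse (ℕ × ℕ)).IsPathSeq g k
  mapsTo : Set.MapsTo g (Set.Iio k) (Set.Iio m ×ˢ Set.Iio n)
  adj_last_first : (hasse (ℕ × ℕ)).Adj (g (k - 1)) (g 0)

lemma IsGridCycle.mono {m n m' n' k : ℕ} {g : ℕ → ℕ × ℕ} (h : IsGridCycle m n k g)
    (hm : m ≤ m') (hn : n ≤ n') : IsGridCycle m' n' k g :=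
  ⟨h.isPathSeq, h.mapsTo.mono_right (Set.prod_mono (Set.Iio_subset_Iio hm)
    (Set.Iio_subset_Iio hn)), h.adj_last_first⟩

-- Row `0` from `(s - 1, 0)` back to `(0, 0)`, then the path moved up one row.
lemma IsGridPath.isGridCycle_addRowBelow {s r L : ℕ} {g : ℕ → ℕ × ℕ} (h : IsGridPath s r L g)
    (hs : 2 ≤ s) :
    IsGridCycle s (r + 1) (s + L + 1) fun i =>
      if i < s then (s - 1 - i, 0) else ((g (i - s)).1, (g (i - s)).2 + 1) := by
  have hfirst : (g 0).1 = 0 ∧ (g 0).2 = 0 := Prod.ext_iff.mp h.first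
  have hlast : (g L).1 = s - 1 ∧ (g L).2 = 0 := Prod.ext_iff.mp h.last
  have hbox : ∀ j ≤ L, (g j).1 < s ∧ (g j).2 < r := fun j hj => h.mapsTo (by simp; omega)
  refine ⟨⟨fun i hi i' hi' he => ?_, fun i hi => ?_⟩, fun i hi => ?_, ?_⟩
  · simp only [Set.mem_Iio] at hi hi'
    split_ifs at he <;> simp only [Prod.mk.injEq] at he <;> try omega
    have := h.isPathSeq.injOn (x₁ := i - s) (x₂ := i' - s) (by simp; omega) (by simp; omega)
      (Prod.ext he.1 (by omega))
    omega
  · rw [hasse_nat_prod_adj]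
    rcases lt_trichotomy (i + 1) s with his | his | his
    · rw [if_pos (by omega), if_pos his]
      omega
    · rw [if_pos (by omega), if_neg (by omega), ← his, Nat.sub_self]
      omega
    · obtain ⟨j, rfl⟩ : ∃ j, i = s + j := ⟨i - s, by omega⟩
      have := hasse_nat_prod_adj.mp (h.isPathSeq.adj j (by omega))
      simp only [show s + j + 1 - s = j + 1 by omega, Nat.add_sub_cancel_left]
      split_ifs <;> omega
  · simp only [Set.mem_Iio, Set.mem_prod] at hi ⊢
    split_ifs <;> try omega
    have := hbox (i - s) (by omega)
    omega
  · rw [hasse_nat_prod_adj, if_neg (by omega), if_pos (by omega),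
      show s + L + 1 - 1 - s = L by omega]
    omega

lemma exists_isGridCycle {m n k : ℕ} (hm : 3 ≤ m) (hodd : Odd m) (hk : Even k) (hmk : m < k)
    (hkn : k ≤ m * n) : ∃ g, IsGridCycle m n k g := by
  obtain ⟨r, rfl⟩ : ∃ r, n = r + 1 := ⟨n - 1, by cases n <;> simp_all⟩
  rw [Nat.mul_add_one] at hkn
  have hk2 := Nat.even_iff.mp hk
  rcases Nat.lt_or_ge (2 * m) k with hmk2 | hmk2
  · have hm2 := Nat.odd_iff.mp hodd
    obtain ⟨g, hg⟩ := exists_isGridPath (r := r) (L := k - m - 1) hm hodd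
      (Nat.even_iff.mpr (by omega)) (by omega) (by omega)
    rw [show k = m + (k - m - 1) + 1 by omega]
    exact ⟨_, hg.isGridCycle_addRowBelow (by omega)⟩
  · have hr : 0 < r := Nat.pos_of_ne_zero (by rintro rfl; omega)
    rw [show k = k / 2 + (k / 2 - 1) + 1 by omega]
    exact ⟨_, ((isGridPath_straight (by omega) one_pos).isGridCycle_addRowBelow (by omega)).mono
      (by omega) (by omega)⟩

variable {V₁ V₂ : Type*} {G₁ : SimpleGraph V₁} {G₂ : SimpleGraph V₂} {c : ℕ → V₁} {p : ℕ → V₂}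
  {m n : ℕ}

lemma IsPathSeq.boxProd_adj_prodMap (hc : G₁.IsPathSeq c m) (hp : G₂.IsPathSeq p n)
    {a b : ℕ × ℕ} (hab : (hasse (ℕ × ℕ)).Adj a b) (ha : a ∈ Set.Iio m ×ˢ Set.Iio n)
    (hb : b ∈ Set.Iio m ×ˢ Set.Iio n) : (G₁ □ G₂).Adj (Prod.map c p a) (Prod.map c p b) := by
  rw [hasse_prod] at hab
  rcases hab with ⟨h1, h2⟩ | ⟨h1, h2⟩
  · exact Or.inl ⟨hc.adj_of_hasse_adj h1 ha.1 hb.1, congrArg p h2⟩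
  · exact Or.inr ⟨hp.adj_of_hasse_adj h1 ha.2 hb.2, congrArg c h2⟩

lemma IsPathSeq.prodMap_comp {g : ℕ → ℕ × ℕ} {k : ℕ} (hg : (hasse (ℕ × ℕ)).IsPathSeq g k)
    (hmaps : Set.MapsTo g (Set.Iio k) (Set.Iio m ×ˢ Set.Iio n)) (hc : G₁.IsPathSeq c m)
    (hp : G₂.IsPathSeq p n) : (G₁ □ G₂).IsPathSeq (Prod.map c p ∘ g) k :=
  ⟨(hc.injOn.prodMap hp.injOn).comp hg.injOn hmaps, fun i hi =>
    hc.boxProd_adj_prodMap hp (hg.adj i hi) (hmaps (by simp; omega)) (hmaps (by simpa using hi))⟩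

lemma IsGridCycle.hasCycleLength_boxProd {k : ℕ} {g : ℕ → ℕ × ℕ} (h : IsGridCycle m n k g)
    (hk : 3 ≤ k) (hc : G₁.IsPathSeq c m) (hp : G₂.IsPathSeq p n) :
    hasCycleLength (G₁ □ G₂) k :=
  hasCycleLength_of_isPathSeq (h.isPathSeq.prodMap_comp h.mapsTo hc hp) hk
    (hc.boxProd_adj_prodMap hp h.adj_last_first (h.mapsTo (by simp; omega))
      (h.mapsTo (by simp; omega)))

lemma IsGridPath.hasCycleLength_boxProd {L : ℕ} {g : ℕ → ℕ × ℕ} (h : IsGridPath m n L g)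
    (hL : 2 ≤ L) (hc : G₁.IsPathSeq c m) (hclose : G₁.Adj (c (m - 1)) (c 0))
    (hp : G₂.IsPathSeq p n) : hasCycleLength (G₁ □ G₂) (L + 1) := by
  refine hasCycleLength_of_isPathSeq (h.isPathSeq.prodMap_comp h.mapsTo hc hp) (by omega) ?_
  simpa [h.first, h.last] using hclose

theorem hasCycleLength_boxProd_of_lt {k : ℕ} (hm : 3 ≤ m) (hodd : Odd m)
    (hc : G₁.IsPathSeq c m) (hclose : G₁.Adj (c (m - 1)) (c 0)) (hp : G₂.IsPathSeq p n)
    (hmk : m < k) (hkn : k ≤ m * n) : hasCycleLength (G₁ □ G₂) k := by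
  rcases Nat.even_or_odd k with hk | hk
  · obtain ⟨g, hg⟩ := exists_isGridCycle hm hodd hk hmk hkn
    exact hg.hasCycleLength_boxProd (by omega) hc hp
  · obtain ⟨g, hg⟩ := exists_isGridPath (r := n) (L := k - 1) hm hodd
      (Nat.Odd.sub_odd hk odd_one) (by omega) (by omega)
    rw [← Nat.sub_add_cancel hk.pos]
    exact hg.hasCycleLength_boxProd (by omega) hc hclose hp

end SimpleGraph

theorem stmt4 {V₁ V₂ : Type*} [Fintype V₁] [Fintype V₂] [DecidableEq V₂]
    (G₁ : SimpleGraph V₁) (G₂ : SimpleGraph V₂)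
    (hodd : Odd (Fintype.card V₁)) (h3 : 3 ≤ Fintype.card V₁)
    (hpanc : Pancyclic G₁)
    (hpath : ∃ (u v : V₂) (p : G₂.Walk u v), p.IsHamiltonian) :
    Pancyclic (G₁ □ G₂) := by
  intro k hk3 hkN
  obtain ⟨v, _, P, hP⟩ := hpath
  rcases le_or_gt k (Fintype.card V₁) with hk | hk
  · exact (hpanc k hk3 hk).map (boxProdLeft G₁ G₂ v)
  obtain ⟨_, C, hC, hCm⟩ := hpanc _ h3 le_rfl
  have hn : P.length + 1 = Fintype.card V₂ := by
    have := Fintype.card_pos_iff.mpr ⟨v⟩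
    rw [hP.length_eq]
    omega
  rw [Fintype.card_prod, ← hCm, ← hn] at hkN
  rw [← hCm] at hk h3 hodd
  exact hasCycleLength_boxProd_of_lt h3 hodd hC.isPathSeq hC.adj_getVert_last hP.isPath.isPathSeq
    hk hkN
end

section
/- If q is a prime with q ≡ 1 (mod 4) and q ≠ 5, then the Paley graph P(q) is pancyclic. -/
open SimpleGraph

/-!
Reduction mod `q` maps the distance graph on `ℕ` with distances `1` and `4 = 2²` into `P(q)`,
injectively on `[0, q)`, so it suffices to find cycles of every length `4 ≤ k ≤ q` in that
distance graph with all vertices below `q`. For `k = 4, 6` small explicit cycles do. For every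
other `k ≥ 5` there is a Hamiltonian cycle of `[0, k)` through the edges `{k - 4, k - 3}` and
`{k - 2, k - 1}`: replacing the first of these edges by the path `k - 4, k, k + 1, k - 3` gives one
for `k + 2`. Triangles come from `3² + 4² = 5²`: the vertices `0, 3², 5²` are pairwise adjacent
as soon as `2, 3, 5` are invertible.
-/

section CycleOfList

variable {V W : Type*} {G : SimpleGraph V} {G' : SimpleGraph W}

theorem hasCycleLength_of_isChain {a : V} {l : List V} (hch : (a :: l ++ [a]).IsChain G.Adj)
    (hnd : (a :: l).Nodup) (hl : 2 ≤ l.length) : hasCycleLength G (l.length + 1) := by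
  obtain ⟨b, l, rfl⟩ := List.exists_cons_of_length_pos (by omega : 0 < l.length)
  have hbl : (b :: (l ++ [a])).IsChain G.Adj := hch.tail
  let p : G.Walk b a :=
    (Walk.ofSupport _ (List.cons_ne_nil _ _) hbl).copy (List.head_cons ..) (by simp)
  have hp : p.IsPath := by
    rw [Walk.isPath_copy, Walk.isPath_def, Walk.support_ofSupport]
    exact (List.perm_append_singleton a (b :: l)).nodup_iff.mpr hnd
  have hlen : p.length = l.length + 1 := by
    rw [Walk.length_copy, Walk.length_ofSupport]
    simp
  refine ⟨a, .cons hch.rel p, ?_, by simp [hlen]⟩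
  rw [Walk.isCycle_iff_isPath_tail_and_le_length]
  exact ⟨by simpa using hp, by simp [hlen] at hl ⊢; omega⟩

theorem hasCycleLength_of_isChain_map (f : G →g G') {a : V} {l : List V}
    (hch : (a :: l ++ [a]).IsChain G.Adj) (hnd : ((a :: l).map f).Nodup) (hl : 2 ≤ l.length) :
    hasCycleLength G' (l.length + 1) := by
  simpa using hasCycleLength_of_isChain (a := f a) (l := l.map f)
    (by simpa using List.isChain_map_of_isChain f (fun _ _ => f.map_rel) hch) (by simpa using hnd)
    (by simpa using hl)

end CycleOfList

def distanceGraph (D : Set ℕ) : SimpleGraph ℕ :=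
  SimpleGraph.fromRel fun u v => ∃ d ∈ D, v = u + d

section PaleyGraph

variable {F : Type*} [Field F]

theorem paley_adj_add_sq (a : F) {t : F} (ht : t ≠ 0) : (paley F).Adj a (a + t ^ 2) := by
  rw [paley, fromRel_adj]
  exact ⟨by simpa using pow_ne_zero 2 ht, Or.inr ⟨t, by ring⟩⟩

theorem paley_hasCycleLength_three (h2 : (2 : F) ≠ 0) (h3 : (3 : F) ≠ 0) (h5 : (5 : F) ≠ 0) :
    hasCycleLength (paley F) 3 := by
  have hab : (paley F).Adj 0 (3 ^ 2) := by simpa only [zero_add] using paley_adj_add_sq 0 h3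
  have hbc : (paley F).Adj (3 ^ 2) (5 ^ 2) := by
    have h4 : (4 : F) ≠ 0 := by simpa [show (4 : F) = 2 * 2 by norm_num] using mul_ne_zero h2 h2
    have := paley_adj_add_sq ((3 : F) ^ 2) h4
    rwa [show (3 : F) ^ 2 + 4 ^ 2 = 5 ^ 2 by norm_num] at this
  have hca : (paley F).Adj (5 ^ 2) 0 := by simpa only [zero_add] using (paley_adj_add_sq 0 h5).symm
  exact hasCycleLength_of_isChain (l := [3 ^ 2, 5 ^ 2])
    (.cons_cons hab (.cons_cons hbc (.cons_cons hca (.singleton _))))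
    (by simp [hab.ne, hbc.ne, hca.ne']) le_rfl

def distanceGraph.natCastHom {D : Set ℕ}
    (hD : ∀ d ∈ D, ∃ t : F, t ≠ 0 ∧ (d : F) = t ^ 2) : distanceGraph D →g paley F where
  toFun := Nat.cast
  map_rel' := by
    rintro u v ⟨-, ⟨d, hd, rfl⟩ | ⟨d, hd, rfl⟩⟩ <;> obtain ⟨t, ht, hdt⟩ := hD d hd
    · simpa [hdt] using paley_adj_add_sq (u : F) ht
    · simpa [hdt] using (paley_adj_add_sq (v : F) ht).symm

end PaleyGraph

theorem paley_zmod_hasCycleLength_of_isChain {q : ℕ} [Fact q.Prime] (h2 : (2 : ZMod q) ≠ 0)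
    {a : ℕ} {l : List ℕ} (hch : (a :: l ++ [a]).IsChain (distanceGraph {1, 4}).Adj)
    (hnd : (a :: l).Nodup) (hlt : ∀ x ∈ a :: l, x < q) (hl : 2 ≤ l.length) :
    hasCycleLength (paley (ZMod q)) (l.length + 1) := by
  have hD : ∀ d ∈ ({1, 4} : Set ℕ), ∃ t : ZMod q, t ≠ 0 ∧ (d : ZMod q) = t ^ 2 := by
    rintro d (rfl | rfl)
    · exact ⟨1, one_ne_zero, by simp⟩
    · exact ⟨2, h2, by norm_num⟩
  refine hasCycleLength_of_isChain_map (distanceGraph.natCastHom hD) hch (hnd.map_on ?_) hl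
  intro x hx y hy (hxy : (x : ZMod q) = y)
  simpa [ZMod.val_natCast_of_lt (hlt x hx), ZMod.val_natCast_of_lt (hlt y hy)] using
    congrArg ZMod.val hxy

theorem distanceGraph_one_four_adj {u v : ℕ}
    (h : v = u + 1 ∨ v = u + 4 ∨ u = v + 1 ∨ u = v + 4) : (distanceGraph {1, 4}).Adj u v := by
  simp only [distanceGraph, fromRel_adj, Set.mem_insert_iff, Set.mem_singleton_iff,
    exists_eq_or_imp, exists_eq_left]
  omega

theorem isChain_distanceGraph_one_four {l : List ℕ}
    (h : l.IsChain fun u v => v = u + 1 ∨ v = u + 4 ∨ u = v + 1 ∨ u = v + 4) :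
    l.IsChain (distanceGraph {1, 4}).Adj :=
  h.imp fun _ _ => distanceGraph_one_four_adj

/-- The Hamiltonian cycle `m, m + 1, P, m + 2, m + 3, Q` of `[0, m + 4)` in the distance graph
with distances `1` and `4`, cut open at its edges `{m, m + 1}` and `{m + 2, m + 3}`. -/
def SplitCycle (m : ℕ) (P Q : List ℕ) : Prop :=
  ((m + 1) :: P ++ [m + 2]).IsChain (distanceGraph {1, 4}).Adj ∧
    ((m + 3) :: Q ++ [m]).IsChain (distanceGraph {1, 4}).Adj ∧ (P ++ Q).Perm (List.range m)

theorem SplitCycle.step {m : ℕ} {P Q : List ℕ} (h : SplitCycle m P Q) :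
    SplitCycle (m + 2) (Q ++ [m]) ((m + 1) :: P) := by
  obtain ⟨hP, hQ, hperm⟩ := h
  refine ⟨?_, ?_, ?_⟩
  · have : ((m + 3) :: (Q ++ m :: [m + 4])).IsChain (distanceGraph {1, 4}).Adj :=
      List.isChain_cons_split.mpr
        ⟨hQ, List.isChain_pair.mpr (distanceGraph_one_four_adj (by omega))⟩
    simpa using this
  · exact hP.cons (by simpa using distanceGraph_one_four_adj (u := m + 5) (v := m + 1) (by omega))
  · calc (Q ++ [m] ++ (m + 1) :: P).Perm (P ++ Q ++ [m, m + 1]) := by grind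
      List.Perm _ (List.range m ++ [m, m + 1]) := hperm.append_right _
      _ = List.range (m + 2) := by simp [List.range_succ]

theorem SplitCycle.exists_add {m : ℕ} {P Q : List ℕ} (h : SplitCycle m P Q) (j : ℕ) :
    ∃ P Q, SplitCycle (m + 2 * j) P Q := by
  induction j with
  | zero => exact ⟨P, Q, h⟩
  | succ j ih =>
    obtain ⟨P, Q, h⟩ := ih
    exact ⟨_, _, h.step⟩

theorem SplitCycle.exists_perm_range {m : ℕ} {P Q : List ℕ} (h : SplitCycle m P Q) :
    ∃ a l, (a :: l ++ [a]).IsChain (distanceGraph {1, 4}).Adj ∧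
      (a :: l).Perm (List.range (m + 4)) := by
  obtain ⟨hP, hQ, hperm⟩ := h
  refine ⟨m, (m + 1) :: P ++ (m + 2) :: (m + 3) :: Q, ?_, ?_⟩
  · simp only [List.cons_append, List.append_assoc, List.isChain_cons_cons,
      List.isChain_cons_append_cons_cons]
    exact ⟨distanceGraph_one_four_adj (by omega), hP, distanceGraph_one_four_adj (by omega), hQ⟩
  · have := hperm.append_right [m, m + 1, m + 2, m + 3]
    simp only [List.range_succ, List.append_assoc] at this ⊢
    grind

theorem splitCycle_one : SplitCycle 1 [] [0] :=
  ⟨isChain_distanceGraph_one_four (by decide), isChain_distanceGraph_one_four (by decide),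
    by decide⟩

theorem splitCycle_four : SplitCycle 4 [] [3, 2, 1, 0] :=
  ⟨isChain_distanceGraph_one_four (by decide), isChain_distanceGraph_one_four (by decide),
    by decide⟩

theorem exists_isChain_distanceGraph_one_four {k : ℕ} (hk : 4 ≤ k) :
    ∃ a l, (a :: l ++ [a]).IsChain (distanceGraph {1, 4}).Adj ∧ (a :: l).Nodup ∧
      (∀ x ∈ a :: l, x < max k 7) ∧ l.length + 1 = k := by
  obtain rfl | rfl | hk : k = 4 ∨ k = 6 ∨ (5 ≤ k ∧ k ≠ 6) := by omega
  · exact ⟨0, [1, 5, 4], isChain_distanceGraph_one_four (by decide), by decide, by decide, rfl⟩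
  · exact ⟨0, [4, 5, 6, 2, 1], isChain_distanceGraph_one_four (by decide), by decide, by decide,
      rfl⟩
  obtain ⟨P, Q, h⟩ : ∃ P Q, SplitCycle (k - 4) P Q := by
    rcases Nat.even_or_odd' k with ⟨j, rfl | rfl⟩
    · simpa [show 2 * j - 4 = 4 + 2 * (j - 4) by omega] using splitCycle_four.exists_add (j - 4)
    · simpa [show 2 * j + 1 - 4 = 1 + 2 * (j - 2) by omega] using splitCycle_one.exists_add (j - 2)
  obtain ⟨a, l, hch, hperm⟩ := h.exists_perm_range
  rw [Nat.sub_add_cancel (by omega)] at hperm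
  refine ⟨a, l, hch, hperm.nodup_iff.mpr List.nodup_range, fun x hx => ?_, ?_⟩
  · have := List.mem_range.mp (hperm.mem_iff.mp hx)
    omega
  · simpa using hperm.length_eq

theorem stmt5 (q : ℕ) [Fact q.Prime] (hq4 : q % 4 = 1) (hq5 : q ≠ 5) :
    ∀ k, 3 ≤ k → k ≤ q → hasCycleLength (paley (ZMod q)) k := by
  intro k hk3 hkq
  have hq : 13 ≤ q := by
    have hp : q.Prime := Fact.out
    by_contra! h
    interval_cases q <;> first | omega | norm_num at hp
  have hne (n : ℕ) (hn0 : 0 < n) (hnq : n < q) : (n : ZMod q) ≠ 0 := by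
    rw [Ne, ZMod.natCast_eq_zero_iff]
    exact Nat.not_dvd_of_pos_of_lt hn0 hnq
  have h2 : (2 : ZMod q) ≠ 0 := by exact_mod_cast hne 2 (by norm_num) (by omega)
  rcases hk3.eq_or_lt with rfl | hk4
  · exact paley_hasCycleLength_three h2 (by exact_mod_cast hne 3 (by norm_num) (by omega))
      (by exact_mod_cast hne 5 (by norm_num) (by omega))
  obtain ⟨a, l, hch, hnd, hlt, rfl⟩ := exists_isChain_distanceGraph_one_four hk4
  exact paley_zmod_hasCycleLength_of_isChain h2 hch hnd
    (fun x hx => (hlt x hx).trans_le (max_le hkq (by omega))) (by omega)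
end

section
/- The Paley graph P(q), for q ≡ 1 (mod 4) a prime power, is strongly regular with parameters (q, (q-1)/2, (q-5)/4, (q-1)/4): it is (q-1)/2-regular, any two adjacent vertices have exactly (q-5)/4 common neighbors, and any two distinct non-adjacent vertices have exactly (q-1)/4 common neighbors. -/
open SimpleGraph

/-!
As `q ≡ 1 (mod 4)`, `-1` is a square, so `a ~ b` iff `χ (a - b) = 1` for the quadratic character
`χ`. The affine bijection `z ↦ u - (u - v) z` sends `0, 1` to `u, v` and identifies the common
neighbours of `u ≠ v` with the `z` satisfying `χ z = χ (z - 1) = χ (u - v)`. Counting these by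
summing `(1 + ε χ z) (1 + δ χ (z - 1))` over `𝔽_q` reduces everything to the Jacobi sum
`∑ χ z χ (z - 1) = -1`.
-/

open Finset

section QuadraticChar

variable {F : Type*} [Field F] [Fintype F] [DecidableEq F]

lemma quadraticChar_mul_eq_one_iff {a : F} (ha : a ≠ 0) (b : F) :
    quadraticChar F (a * b) = 1 ↔ quadraticChar F b = quadraticChar F a := by
  rw [map_mul]
  rcases quadraticChar_dichotomy ha with h | h <;> rw [h] <;> omega

lemma sum_quadraticChar_mul_quadraticChar_sub_one (hF : ringChar F ≠ 2) :
    ∑ z : F, quadraticChar F z * quadraticChar F (z - 1) = -1 := by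
  have hsub (z : F) :
      quadraticChar F (z - 1) = quadraticChar F (-1) * quadraticChar F (1 - z) := by
    rw [← map_mul, neg_one_mul, neg_sub]
  have hJ : jacobiSum (quadraticChar F) (quadraticChar F) = -quadraticChar F (-1) := by
    nth_rw 2 [← (quadraticChar_isQuadratic F).inv]
    exact jacobiSum_nontrivial_inv (quadraticChar_ne_one hF)
  simp_rw [hsub, mul_left_comm _ (quadraticChar F (-1)), ← mul_sum]
  rw [← jacobiSum, hJ, mul_neg, ← sq, quadraticChar_sq_one (neg_ne_zero.mpr one_ne_zero)]

lemma two_mul_card_filter_quadraticChar_eq (hF : ringChar F ≠ 2) {ε : ℤ}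
    (hε : ε = 1 ∨ ε = -1) :
    2 * (#{z : F | quadraticChar F z = ε} : ℤ) = Fintype.card F - 1 := by
  have indicator (z : F) : (if quadraticChar F z = ε then 2 else 0 : ℤ) =
      1 + ε * quadraticChar F z - if z = 0 then 1 else 0 := by
    by_cases hz : z = 0
    · subst hz; rcases hε with rfl | rfl <;> simp
    · rcases quadraticChar_dichotomy hz with h | h <;> rcases hε with rfl | rfl <;> simp [h, hz]
  rw [card_filter, Nat.cast_sum, mul_sum]
  simp only [Nat.cast_ite, Nat.cast_one, Nat.cast_zero, mul_ite, mul_one, mul_zero, indicator]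
  rw [sum_sub_distrib, sum_add_distrib, ← mul_sum, quadraticChar_sum_zero hF]
  simp

lemma four_mul_card_filter_quadraticChar_eq_and (hF : ringChar F ≠ 2) {ε δ : ℤ}
    (hε : ε = 1 ∨ ε = -1) (hδ : δ = 1 ∨ δ = -1) :
    4 * (#{z : F | quadraticChar F z = ε ∧ quadraticChar F (z - 1) = δ} : ℤ) =
      Fintype.card F - 2 - ε - δ * quadraticChar F (-1) - ε * δ := by
  have indicator (z : F) :
      (if quadraticChar F z = ε ∧ quadraticChar F (z - 1) = δ then 4 else 0 : ℤ) =
        (1 + ε * quadraticChar F z) * (1 + δ * quadraticChar F (z - 1)) -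
          (if z = 0 then 1 + δ * quadraticChar F (-1) else 0) - if z = 1 then 1 + ε else 0 := by
    by_cases hz0 : z = 0
    · subst hz0; rcases hε with rfl | rfl <;> simp
    by_cases hz1 : z = 1
    · subst hz1; rcases hδ with rfl | rfl <;> simp
    rcases quadraticChar_dichotomy hz0 with h | h <;>
      rcases quadraticChar_dichotomy (sub_ne_zero.mpr hz1) with h' | h' <;>
      rcases hε with rfl | rfl <;> rcases hδ with rfl | rfl <;> simp [h, h', hz0, hz1]
  have hshift : ∑ z : F, quadraticChar F (z - 1) = 0 :=
    ((Equiv.subRight 1).sum_comp (quadraticChar F)).trans (quadraticChar_sum_zero hF)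
  rw [card_filter, Nat.cast_sum, mul_sum]
  simp only [Nat.cast_ite, Nat.cast_one, Nat.cast_zero, mul_ite, mul_one, mul_zero, indicator]
  simp only [sum_sub_distrib, sum_ite_eq', mem_univ, if_true, add_mul, mul_add, one_mul, mul_one,
    sum_add_distrib, ← mul_sum, quadraticChar_sum_zero hF, hshift]
  simp_rw [mul_mul_mul_comm ε]
  rw [← mul_sum, sum_quadraticChar_mul_quadraticChar_sub_one hF]
  simp only [sum_const, card_univ, nsmul_eq_mul, mul_one, mul_zero, add_zero, zero_add]
  ring

end QuadraticChar

section Paley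

variable {F : Type*} [Field F] [Fintype F] [DecidableEq F]

lemma paley_adj_iff (h : IsSquare (-1 : F)) {a b : F} :
    (paley F).Adj a b ↔ quadraticChar F (a - b) = 1 := by
  rw [paley, SimpleGraph.fromRel_adj]
  constructor
  · rintro ⟨hab, hsq | hsq⟩
    · exact (quadraticChar_one_iff_isSquare (sub_ne_zero.mpr hab)).mpr hsq
    · have hsq' := h.mul hsq
      rw [neg_one_mul, neg_sub] at hsq'
      exact (quadraticChar_one_iff_isSquare (sub_ne_zero.mpr hab)).mpr hsq'
  · intro hχ
    have hab : a - b ≠ 0 := fun h0 ↦ by simp [h0] at hχ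
    exact ⟨sub_ne_zero.mp hab, .inl ((quadraticChar_one_iff_isSquare hab).mp hχ)⟩

lemma natCard_neighborSet_paley (h : IsSquare (-1 : F)) (v : F) :
    Nat.card ((paley F).neighborSet v) = #{z : F | quadraticChar F z = 1} := by
  rw [← Fintype.card_subtype, ← Nat.card_eq_fintype_card]
  refine Nat.card_congr ((Equiv.subLeft v).subtypeEquiv fun z ↦ ?_).symm
  simp [paley_adj_iff h]

lemma natCard_commonNeighbors_paley (h : IsSquare (-1 : F)) {u v : F} (huv : u ≠ v) :
    Nat.card ((paley F).neighborSet u ∩ (paley F).neighborSet v : Set F) =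
      #{z : F | quadraticChar F z = quadraticChar F (u - v) ∧
        quadraticChar F (z - 1) = quadraticChar F (u - v)} := by
  have hd : u - v ≠ 0 := sub_ne_zero.mpr huv
  rw [← Fintype.card_subtype, ← Nat.card_eq_fintype_card]
  let e : F ≃ F := (Equiv.mulLeft₀ _ hd).trans (Equiv.subLeft u)
  refine Nat.card_congr (e.subtypeEquiv fun z ↦ ?_).symm
  have hu : u - (u - (u - v) * z) = (u - v) * z := by ring
  have hv : v - (u - (u - v) * z) = (u - v) * (z - 1) := by ring
  simp only [e, Equiv.trans_apply, Equiv.mulLeft₀_apply, Equiv.subLeft_apply, Set.mem_inter_iff,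
    SimpleGraph.mem_neighborSet, paley_adj_iff h, hu, hv, quadraticChar_mul_eq_one_iff hd]

end Paley

theorem stmt7 {F : Type*} [Field F] [Fintype F] (h4 : Fintype.card F % 4 = 1) :
    (∀ v : F, Nat.card ((paley F).neighborSet v) = (Fintype.card F - 1) / 2) ∧
    (∀ u v : F, (paley F).Adj u v →
      Nat.card (((paley F).neighborSet u ∩ (paley F).neighborSet v : Set F)) =
        (Fintype.card F - 5) / 4) ∧
    (∀ u v : F, u ≠ v → ¬ (paley F).Adj u v →
      Nat.card (((paley F).neighborSet u ∩ (paley F).neighborSet v : Set F)) =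
        (Fintype.card F - 1) / 4) := by
  classical
  have hF : ringChar F ≠ 2 := fun h ↦ by
    have := FiniteField.even_card_iff_char_two.mp h
    omega
  have hsq : IsSquare (-1 : F) := FiniteField.isSquare_neg_one_iff.mpr (by omega)
  have hχ : quadraticChar F (-1) = 1 :=
    (quadraticChar_one_iff_isSquare (neg_ne_zero.mpr one_ne_zero)).mpr hsq
  refine ⟨fun v ↦ ?_, fun u v huv ↦ ?_, fun u v huv hnadj ↦ ?_⟩
  · have := two_mul_card_filter_quadraticChar_eq hF (ε := 1) (.inl rfl)
    rw [natCard_neighborSet_paley hsq]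
    omega
  · have := four_mul_card_filter_quadraticChar_eq_and hF (ε := 1) (δ := 1) (.inl rfl) (.inl rfl)
    rw [hχ] at this
    rw [natCard_commonNeighbors_paley hsq huv.ne, (paley_adj_iff hsq).mp huv]
    omega
  · have hnsq : quadraticChar F (u - v) = -1 :=
      (quadraticChar_eq_neg_one_iff_not_one (sub_ne_zero.mpr huv)).mpr
        (mt (paley_adj_iff hsq).mpr hnadj)
    have := four_mul_card_filter_quadraticChar_eq_and hF (ε := -1) (δ := -1) (.inr rfl) (.inr rfl)
    rw [hχ] at this
    rw [natCard_commonNeighbors_paley hsq huv, hnsq]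
    omega
end

section
/- Let q = q₀ⁿ with q₀ prime, q ≡ 1 (mod 4), and let 𝔽_q be viewed as an 𝔽_{q₀}-vector space with a basis f₀,…,f_{n−1} consisting of nonzero squares. Let W₀ = span(f₀) and W* = span(f₁,…,f_{n−1}), and let G_{W₀}, G_{W*} be the induced subgraphs of P(q) on W₀ and W* respectively. Then the Cartesian product G_{W₀} × G_{W*} is a spanning subgraph of P(q), under the identification (α₀, α*) ↦ α₀ + α*. -/
open SimpleGraph

lemma Module.Basis.isCompl_span_singleton_span_image_ne {ι R M : Type*} [Ring R]
    [AddCommGroup M] [Module R M] (b : Module.Basis ι R M) (i : ι) :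
    IsCompl (Submodule.span R {b i}) (Submodule.span R (b '' {j | j ≠ i})) := by
  rw [← Set.image_singleton, ← Set.compl_singleton_eq]
  exact b.linearIndependent.isCompl_span_image b.span_eq isCompl_compl

lemma paley_adj_add_right {F : Type*} [Field F] {a b : F} (c : F) :
    (paley F).Adj (a + c) (b + c) ↔ (paley F).Adj a b := by
  simp only [paley, fromRel_adj, add_sub_add_right_eq_sub, ne_eq, add_left_inj]

lemma SimpleGraph.adj_add_of_boxProd_induce_adj {A : Type*} [AddCommGroup A]
    {G : SimpleGraph A} (hG : ∀ {a b} (c : A), G.Adj a b → G.Adj (a + c) (b + c))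
    {S T : Set A} {p q : S × T} (h : (G.induce S □ G.induce T).Adj p q) :
    G.Adj (p.1 + p.2) (q.1 + q.2) := by
  rcases h with ⟨hadj, heq⟩ | ⟨hadj, heq⟩
  · rw [heq]
    exact hG _ hadj
  · rw [heq, add_comm (q.1 : A), add_comm (q.1 : A)]
    exact hG _ hadj

theorem stmt11_general (q₀ n : ℕ) (hn : 0 < n)
    {F : Type*} [Field F] [Algebra (ZMod q₀) F]
    (b : Module.Basis (Fin n) (ZMod q₀) F)
    (W₀ Wstar : Submodule (ZMod q₀) F)
    (hW₀ : W₀ = Submodule.span (ZMod q₀) {b ⟨0, hn⟩})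
    (hWstar : Wstar = Submodule.span (ZMod q₀) (b '' {i | i ≠ ⟨0, hn⟩})) :
    Function.Bijective
      (fun p : ↥(W₀ : Set F) × ↥(Wstar : Set F) => (p.1 : F) + (p.2 : F)) ∧
    ∀ p q : ↥(W₀ : Set F) × ↥(Wstar : Set F),
      ((paley F).induce (W₀ : Set F) □ (paley F).induce (Wstar : Set F)).Adj p q →
      (paley F).Adj ((p.1 : F) + (p.2 : F)) ((q.1 : F) + (q.2 : F)) := by
  have hcompl : IsCompl W₀ Wstar := by
    rw [hW₀, hWstar]
    exact b.isCompl_span_singleton_span_image_ne _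
  exact ⟨(Submodule.prodEquivOfIsCompl W₀ Wstar hcompl).bijective,
    fun _ _ => adj_add_of_boxProd_induce_adj fun c => (paley_adj_add_right c).2⟩

theorem stmt11 (q₀ n : ℕ) [Fact q₀.Prime] (hn : 0 < n)
    {F : Type*} [Field F] [Fintype F] [Algebra (ZMod q₀) F]
    (hcard : Fintype.card F = q₀ ^ n) (h4 : Fintype.card F % 4 = 1)
    (b : Module.Basis (Fin n) (ZMod q₀) F) (hb : ∀ i, b i ≠ 0 ∧ IsSquare (b i))
    (W₀ Wstar : Submodule (ZMod q₀) F)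
    (hW₀ : W₀ = Submodule.span (ZMod q₀) {b ⟨0, hn⟩})
    (hWstar : Wstar = Submodule.span (ZMod q₀) (b '' {i | i ≠ ⟨0, hn⟩})) :
    Function.Bijective
      (fun p : ↥(W₀ : Set F) × ↥(Wstar : Set F) => (p.1 : F) + (p.2 : F)) ∧
    ∀ p q : ↥(W₀ : Set F) × ↥(Wstar : Set F),
      ((paley F).induce (W₀ : Set F) □ (paley F).induce (Wstar : Set F)).Adj p q →
      (paley F).Adj ((p.1 : F) + (p.2 : F)) ((q.1 : F) + (q.2 : F)) :=
  stmt11_general q₀ n hn b W₀ Wstar hW₀ hWstar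
end

section
/- Let G be the Cayley graph Cay(ℤ/mℤ, S) with 1 ∈ S, S symmetric, 0 ∉ S. Fix n with 5 ≤ n ≤ m, and suppose α is a common neighbor of the vertices 0 and n−2 with 1 < α < n−2. Then G contains a cycle of length n through the vertices {0, 1, …, n−1}. -/
/-!
The cycle `0, α, α - 1, …, 2, α + 2, …, n - 1, α + 1, 1, 0` moves by `±1` except along the
chords `0 — α`, `2 — α + 2`, `α + 1 — 1` of difference `α` and the chord `n - 1 — α + 1` of
difference `n - 2 - α`. Both differences lie in `S` because `α` is adjacent to `0` and to `n - 2`.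
Since `n ≤ m`, the residues of `0, …, n - 1` are distinct, so this closed walk is a cycle.
-/

open SimpleGraph

namespace SimpleGraph

variable {V : Type*} {G : SimpleGraph V}

theorem Walk.isCycle_of_support_eq {v : V} {l : List V} {p : G.Walk v v}
    (hp : p.support = v :: l ++ [v]) (hnd : (v :: l).Nodup) (hlen : 2 ≤ l.length) :
    p.IsCycle := by
  have hlength : p.length = l.length + 1 := by
    simpa [hp] using p.length_support.symm
  rw [isCycle_iff_isPath_tail_and_le_length]
  refine ⟨IsPath.mk' ?_, by omega⟩
  rw [support_tail_of_not_nil _ (by simp [← length_eq_zero_iff, hlength]), hp]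
  simpa [List.nodup_append_comm (l₁ := l)] using hnd

theorem exists_isCycle_support_eq_of_isChain {v : V} {l : List V} (hnd : (v :: l).Nodup)
    (hlen : 2 ≤ l.length) (hc : (v :: l ++ [v]).IsChain G.Adj) :
    ∃ p : G.Walk v v, p.IsCycle ∧ p.support = v :: l ++ [v] := by
  let p : G.Walk v v := (Walk.ofSupport _ (List.concat_ne_nil _ _) hc).copy rfl (by simp)
  have hp : p.support = v :: l ++ [v] :=
    (Walk.support_copy _ _ _).trans (Walk.support_ofSupport _ _)
  exact ⟨p, p.isCycle_of_support_eq hp hnd hlen, hp⟩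

end SimpleGraph

theorem cayley_adj_iff {A : Type*} [AddGroup A] {S : Set A} (hsym : ∀ s ∈ S, -s ∈ S)
    (h0 : (0 : A) ∉ S) {u v : A} : (cayley S).Adj u v ↔ u - v ∈ S := by
  rw [cayley, SimpleGraph.fromRel_adj]
  refine ⟨?_, fun h => ⟨fun huv => h0 (by simpa [huv] using h), Or.inl h⟩⟩
  rintro ⟨-, h | h⟩
  · exact h
  · simpa using hsym _ h

/-- The vertices `α, α - 1, …, 2, α + 2, …, n - 1, α + 1, 1`, in the order in which the cycle
visits them after `0`. -/
def cycleOrder (α n : ℕ) : List ℕ :=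
  (List.range' 2 (α - 1)).reverse ++ List.range' (α + 2) (n - α - 2) ++ [α + 1, 1]

theorem length_cycleOrder {α n : ℕ} (hα : 1 ≤ α) (hαn : α + 2 ≤ n) :
    (cycleOrder α n).length = n - 1 := by
  simp [cycleOrder]
  omega

theorem mem_zero_cons_cycleOrder {α n x : ℕ} (hα : 1 ≤ α) (hαn : α + 2 ≤ n) :
    x ∈ 0 :: cycleOrder α n ↔ x < n := by
  simp only [cycleOrder, List.mem_cons, List.mem_append, List.mem_reverse, List.mem_range'_1,
    List.not_mem_nil]
  grind

theorem nodup_zero_cons_cycleOrder {α n : ℕ} (hα : 1 ≤ α) :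
    (0 :: cycleOrder α n).Nodup := by
  simp [cycleOrder, List.nodup_append, List.mem_range'_1, List.nodup_range']
  grind

theorem isChain_cycleOrder {R : ℕ → ℕ → Prop} (hR : ∀ {x y}, R x y → R y x) {α n : ℕ}
    (hstep : ∀ x, R x (x + 1)) (hchord : ∀ x, R x (x + α)) (hlast : R (n - 1) (α + 1))
    (hα : 2 ≤ α) (hαn : α + 3 ≤ n) :
    (0 :: cycleOrder α n ++ [0]).IsChain R := by
  have hdown : (List.range' 2 (α - 1)).reverse.IsChain R := List.isChain_reverse.2 <|
    (List.isChain_range' 2 _ 1).imp fun x y (h : y = x + 1) => h ▸ hR (hstep x)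
  have hup : (List.range' (α + 2) (n - α - 2)).IsChain R :=
    (List.isChain_range' _ _ 1).imp fun x y (h : y = x + 1) => h ▸ hstep x
  have htail : [α + 1, 1, 0].IsChain R := by
    simpa [add_comm α] using ⟨hR (hchord 1), hR (hstep 0)⟩
  have hlen₁ : α - 1 ≠ 0 := by omega
  have hlen₂ : n - α - 2 ≠ 0 := by omega
  rw [show 0 :: cycleOrder α n ++ [0] = 0 :: ((List.range' 2 (α - 1)).reverse ++
    (List.range' (α + 2) (n - α - 2) ++ [α + 1, 1, 0])) by simp [cycleOrder],
    List.isChain_cons, List.isChain_append, List.isChain_append]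
  refine ⟨?_, hdown, ⟨hup, htail, ?_⟩, ?_⟩ <;>
    simp only [List.head?_append, List.head?_reverse, List.getLast?_reverse, List.head?_range',
      List.getLast?_range', hlen₁, hlen₂, if_false, List.head?_cons, Option.some_or,
      Option.mem_def, Option.some.injEq, forall_eq']
  · simpa [show 2 + (α - 1) - 1 = α by omega] using hchord 0
  · rwa [show α + 2 + (n - α - 2) - 1 = n - 1 by omega]
  · simpa [add_comm] using hchord 2

theorem ZMod.natCast_injOn_Iio (m : ℕ) : Set.InjOn (Nat.cast : ℕ → ZMod m) (Set.Iio m) :=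
  fun x hx y hy hxy => by
    rwa [ZMod.natCast_eq_natCast_iff', Nat.mod_eq_of_lt hx, Nat.mod_eq_of_lt hy] at hxy

theorem isChain_cayley_map_cycleOrder {A : Type*} [AddCommGroupWithOne A] {S : Set A}
    (hS1 : (1 : A) ∈ S) (hsym : ∀ s ∈ S, -s ∈ S) (h0 : (0 : A) ∉ S) {α n : ℕ}
    (hadj0 : (cayley S).Adj 0 (α : A)) (hadjn : (cayley S).Adj ((n : A) - 2) (α : A))
    (hα : 2 ≤ α) (hαn : α + 3 ≤ n) :
    ((0 :: cycleOrder α n ++ [0]).map (Nat.cast : ℕ → A)).IsChain (cayley S).Adj := by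
  have hadj {u v : A} := cayley_adj_iff hsym h0 (u := u) (v := v)
  have hαS : (α : A) ∈ S := by simpa using hsym _ (hadj.1 hadj0)
  refine (List.isChain_map _).2 <| isChain_cycleOrder (fun h => h.symm) (fun x => hadj.2 ?_)
    (fun x => hadj.2 ?_) (hadj.2 ?_) hα hαn
  · simpa using hsym _ hS1
  · simpa using hsym _ hαS
  · convert hadj.1 hadjn using 1
    push_cast [Nat.cast_sub (by omega : 1 ≤ n), ← one_add_one_eq_two]
    abel

theorem stmt14_general (m n : ℕ) (S : Set (ZMod m)) (hS1 : (1 : ZMod m) ∈ S)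
    (hsym : ∀ s ∈ S, -s ∈ S) (h0 : (0 : ZMod m) ∉ S)
    (hnm : n ≤ m) (α : ℕ) (hα1 : 1 < α) (hα2 : α < n - 2)
    (hadj0 : (cayley S).Adj 0 (α : ZMod m))
    (hadjn : (cayley S).Adj ((n : ZMod m) - 2) (α : ZMod m)) :
    ∃ w : (cayley S).Walk 0 0, w.IsCycle ∧ w.length = n ∧
      (∀ v ∈ w.support, ∃ i, i < n ∧ v = (i : ZMod m)) ∧
      (∀ i, i < n → (i : ZMod m) ∈ w.support) := by
  have hmem {x : ℕ} : x ∈ 0 :: cycleOrder α n ↔ x < n :=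
    mem_zero_cons_cycleOrder (by omega) (by omega)
  have hnodup : ((0 :: cycleOrder α n).map (Nat.cast : ℕ → ZMod m)).Nodup :=
    (nodup_zero_cons_cycleOrder (by omega)).map_on fun x hx y hy =>
      ZMod.natCast_injOn_Iio m ((hmem.1 hx).trans_le hnm) ((hmem.1 hy).trans_le hnm)
  have hlen := length_cycleOrder (by omega : 1 ≤ α) (by omega : α + 2 ≤ n)
  obtain ⟨w, hcyc, hsupp⟩ := SimpleGraph.exists_isCycle_support_eq_of_isChain
    (l := (cycleOrder α n).map Nat.cast) (by simpa using hnodup) (by simp [hlen]; omega)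
    (by simpa using isChain_cayley_map_cycleOrder hS1 hsym h0 hadj0 hadjn (by omega) (by omega))
  replace hsupp : w.support = (0 :: cycleOrder α n ++ [0]).map Nat.cast := by simp [hsupp]
  refine ⟨w, hcyc, ?_, fun v hv => ?_, fun i hi => ?_⟩
  · have := w.length_support
    simp [hsupp, hlen] at this
    omega
  · obtain ⟨x, hx, rfl⟩ := List.mem_map.1 (hsupp ▸ hv)
    rcases List.mem_append.1 hx with hx | hx
    · exact ⟨x, hmem.1 hx, rfl⟩
    · exact ⟨0, by omega, by simp_all⟩
  · exact hsupp ▸ List.mem_map_of_mem (List.mem_append_left _ (hmem.2 hi))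

theorem stmt14 (m n : ℕ) (S : Set (ZMod m)) (hS1 : (1 : ZMod m) ∈ S)
    (hsym : ∀ s ∈ S, -s ∈ S) (h0 : (0 : ZMod m) ∉ S)
    (h5 : 5 ≤ n) (hnm : n ≤ m) (α : ℕ) (hα1 : 1 < α) (hα2 : α < n - 2)
    (hadj0 : (cayley S).Adj 0 (α : ZMod m))
    (hadjn : (cayley S).Adj ((n : ZMod m) - 2) (α : ZMod m)) :
    ∃ w : (cayley S).Walk 0 0, w.IsCycle ∧ w.length = n ∧
      (∀ v ∈ w.support, ∃ i, i < n ∧ v = (i : ZMod m)) ∧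
      (∀ i, i < n → (i : ZMod m) ∈ w.support) :=
  stmt14_general m n S hS1 hsym h0 hnm α hα1 hα2 hadj0 hadjn
end

section
/- Let G₂ be a graph on vertex set V₂ of size n with a Hamiltonian path, and let G₁ be a Hamiltonian graph of order q₀ (any positive integer ≥ 3). If a graph G on vertex set V₁ × V₂ contains G₁ × G₂ as a spanning subgraph and G₁ × G₂ contains a Hamiltonian path, then G contains a Hamiltonian path. In particular, by induction, for a basis f₁,…,f_{n−1} of squares, each induced subgraph G_{W*_i} of the Paley graph P(q₀ⁿ) on the subspace W*_i = span(f₁,…,f_i) contains a Hamiltonian path. -/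
open SimpleGraph

/-!
A Hamiltonian path is the same as a duplicate-free list of all vertices whose consecutive
entries are adjacent. In a Cartesian product `G₁ □ G₂` such a list is obtained by running
along the path of `G₁` in every fibre over the path of `G₂`, alternately forwards and
backwards. Since the Paley graph is translation invariant and `f` is a nonzero square, the map
`(c, w) ↦ c • f + w` sends the product of the line `𝔽_{q₀} f` (traversed as `0, f, 2f, …`)
and the subgraph induced on a subspace `W ∌ f` bijectively and edge-preservingly onto the
subgraph induced on `W + 𝔽_{q₀} f`; induction along `f₁, …, f_{n-1}` gives the Paley statement.
-/

namespace List

variable {α β : Type*}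

def boustrophedon (a : List α) : List β → List (α × β)
  | [] => []
  | y :: ys => a.map (·, y) ++ boustrophedon a.reverse ys

@[simp]
theorem boustrophedon_nil (a : List α) : a.boustrophedon ([] : List β) = [] := rfl

theorem boustrophedon_cons (a : List α) (y : β) (ys : List β) :
    a.boustrophedon (y :: ys) = a.map (·, y) ++ a.reverse.boustrophedon ys := rfl

theorem mem_boustrophedon {a : List α} {b : List β} {x : α × β} :
    x ∈ a.boustrophedon b ↔ x.1 ∈ a ∧ x.2 ∈ b := by
  induction b generalizing a with
  | nil => simp
  | cons y ys ih =>
    rw [boustrophedon_cons, mem_append, ih, mem_reverse, mem_map, mem_cons]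
    constructor
    · rintro (⟨u, hu, rfl⟩ | ⟨hu, hy⟩)
      exacts [⟨hu, .inl rfl⟩, ⟨hu, .inr hy⟩]
    · rintro ⟨hu, rfl | hy⟩
      exacts [.inl ⟨x.1, hu, rfl⟩, .inr ⟨hu, hy⟩]

@[simp]
theorem nil_boustrophedon (b : List β) : ([] : List α).boustrophedon b = [] := by
  induction b with
  | nil => rfl
  | cons y ys ih => simpa [boustrophedon_cons] using ih

theorem head?_boustrophedon_cons (a : List α) (y : β) (ys : List β) :
    (a.boustrophedon (y :: ys)).head? = a.head?.map (·, y) := by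
  cases a with
  | nil => simp [boustrophedon_cons]
  | cons u a => simp [boustrophedon_cons]

theorem Nodup.boustrophedon {a : List α} {b : List β} (ha : a.Nodup) (hb : b.Nodup) :
    (a.boustrophedon b).Nodup := by
  induction b generalizing a with
  | nil => exact nodup_nil
  | cons y ys ih =>
    rw [nodup_cons] at hb
    refine nodup_append.2
      ⟨ha.map fun _ _ h => (Prod.ext_iff.1 h).1, ih (nodup_reverse.2 ha) hb.2, ?_⟩
    rintro _ hx z hz rfl
    obtain ⟨u, -, rfl⟩ := mem_map.1 hx
    exact hb.1 (mem_boustrophedon.1 hz).2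

theorem IsChain.boustrophedon {G : SimpleGraph α} {H : SimpleGraph β} {a : List α} {b : List β}
    (ha : a.IsChain G.Adj) (hb : b.IsChain H.Adj) :
    (a.boustrophedon b).IsChain (G □ H).Adj := by
  induction b generalizing a with
  | nil => exact .nil
  | cons y ys ih =>
    have ha' : a.reverse.IsChain G.Adj := isChain_reverse.2 (ha.imp fun _ _ h => h.symm)
    refine (isChain_map _ |>.2 (ha.imp fun _ _ h => ?_)).append (ih ha' hb.tail) ?_
    · exact SimpleGraph.boxProd_adj_left.2 h
    · cases ys with
      | nil => simp
      | cons y' ys =>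
        simp only [head?_boustrophedon_cons, head?_reverse, getLast?_map, Option.mem_def,
          Option.map_eq_some_iff]
        rintro _ ⟨u, hu, rfl⟩ _ ⟨v, hv, rfl⟩
        obtain rfl : u = v := Option.some_inj.1 (hu.symm.trans hv)
        exact SimpleGraph.boxProd_adj_right.2 (isChain_cons_cons.1 hb).1

end List

namespace SimpleGraph

variable {α β : Type*} [DecidableEq α] [DecidableEq β]

def Traceable (G : SimpleGraph α) : Prop :=
  ∃ (u v : α) (p : G.Walk u v), p.IsHamiltonian

theorem traceable_iff_exists_list {G : SimpleGraph α} :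
    G.Traceable ↔ ∃ l : List α, l ≠ [] ∧ l.Nodup ∧ l.IsChain G.Adj ∧ ∀ x, x ∈ l := by
  constructor
  · rintro ⟨u, v, p, hp⟩
    exact ⟨p.support, p.support_ne_nil, hp.isPath.support_nodup, p.isChain_adj_support,
      hp.mem_support⟩
  · rintro ⟨l, hne, hnd, hch, hmem⟩
    refine ⟨_, _, Walk.ofSupport l hne hch, ?_⟩
    exact ((Walk.isPath_def _).2 (by simpa using hnd)).isHamiltonian_of_mem (by simpa using hmem)

theorem traceable_of_subsingleton [Subsingleton α] (G : SimpleGraph α) (a : α) : G.Traceable :=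
  ⟨a, a, .nil, Walk.IsHamiltonian.of_subsingleton⟩

theorem Traceable.map {G : SimpleGraph α} {H : SimpleGraph β} (f : G →g H)
    (hf : Function.Bijective f) (hG : G.Traceable) : H.Traceable :=
  let ⟨u, v, p, hp⟩ := hG
  ⟨f u, f v, p.map f, hp.map f hf⟩

theorem Traceable.mono {G H : SimpleGraph α} (hGH : G ≤ H) (hG : G.Traceable) : H.Traceable :=
  hG.map (Hom.ofLE hGH) Function.bijective_id

theorem Traceable.boxProd {G : SimpleGraph α} {H : SimpleGraph β} (hG : G.Traceable)
    (hH : H.Traceable) : (G □ H).Traceable := by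
  obtain ⟨a, ha, ha_nd, ha_ch, ha_mem⟩ := traceable_iff_exists_list.1 hG
  obtain ⟨b, hb, hb_nd, hb_ch, hb_mem⟩ := traceable_iff_exists_list.1 hH
  have hmem (x : α × β) : x ∈ a.boustrophedon b := List.mem_boustrophedon.2 ⟨ha_mem _, hb_mem _⟩
  obtain ⟨u, -⟩ := List.exists_mem_of_ne_nil a ha
  obtain ⟨v, -⟩ := List.exists_mem_of_ne_nil b hb
  exact traceable_iff_exists_list.2 ⟨_, List.ne_nil_of_mem (hmem (u, v)),
    ha_nd.boustrophedon hb_nd, ha_ch.boustrophedon hb_ch, hmem⟩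

theorem traceable_of_adj_add_one {p : ℕ} [NeZero p] (G : SimpleGraph (ZMod p))
    (h : ∀ x, G.Adj x (x + 1)) : G.Traceable := by
  refine traceable_iff_exists_list.2 ⟨(List.range p).map (↑), by simp [NeZero.ne p], ?_, ?_, ?_⟩
  · refine (List.nodup_range).map_on fun m hm k hk hmk => ?_
    rw [List.mem_range] at hm hk
    rw [← ZMod.val_cast_of_lt hm, ← ZMod.val_cast_of_lt hk, hmk]
  · exact (List.isChain_map _).2 ((List.isChain_range _ _).2 fun m _ => by simpa using h m)
  · intro x
    exact List.mem_map.2 ⟨x.val, List.mem_range.2 (ZMod.val_lt x), ZMod.natCast_zmod_val x⟩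

theorem traceable_comap_smul {p : ℕ} [NeZero p] {A : Type*} [AddCommGroup A]
    [Module (ZMod p) A] {Γ : SimpleGraph A} {g : A} (hg : ∀ x, Γ.Adj x (x + g)) :
    (Γ.comap (· • g) : SimpleGraph (ZMod p)).Traceable :=
  traceable_of_adj_add_one _ fun c => by simpa [add_smul] using hg (c • g)

end SimpleGraph

section TranslationInvariant

variable {K A : Type*} [Field K] [DecidableEq K] [AddCommGroup A] [Module K A] [DecidableEq A]

open Submodule

theorem SimpleGraph.Traceable.induce_span_insert {Γ : SimpleGraph A}
    (hΓ : ∀ x y t, Γ.Adj x y → Γ.Adj (t + x) (t + y)) {g : A} {s : Set A}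
    (hg : g ∉ span K s) (hline : (Γ.comap (· • g) : SimpleGraph K).Traceable)
    (hs : (Γ.induce (span K s : Set A)).Traceable) :
    (Γ.induce (span K (insert g s) : Set A)).Traceable := by
  let φ : (Γ.comap (· • g) : SimpleGraph K).boxProd (Γ.induce (span K s : Set A)) →g
      Γ.induce (span K (insert g s) : Set A) :=
    { toFun x := ⟨x.1 • g + x.2, mem_span_insert.2 ⟨x.1, x.2, x.2.2, rfl⟩⟩
      map_rel' := by
        rintro ⟨c, w⟩ ⟨c', w'⟩ (⟨hc, rfl⟩ | ⟨hw, rfl⟩)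
        · simpa only [comap_adj, Function.Embedding.coe_subtype, add_comm _ (w : A)]
            using hΓ _ _ w hc
        · exact hΓ _ _ _ hw }
  refine (hline.boxProd hs).map φ ⟨?_, ?_⟩
  · rintro ⟨c, w⟩ ⟨c', w'⟩ h
    have h : (c - c') • g = (w' : A) - w := by
      rw [sub_smul, sub_eq_sub_iff_add_eq_add, add_comm (w' : A)]
      exact congrArg Subtype.val h
    obtain rfl : c = c' := by
      by_contra hcc
      exact hg ((smul_mem_iff _ (sub_ne_zero.2 hcc)).1 (h ▸ sub_mem w'.2 w.2))
    obtain rfl : w = w' := Subtype.ext (sub_eq_zero.1 (by simpa using h.symm)).symm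
    rfl
  · rintro ⟨x, hx⟩
    obtain ⟨c, w, hw, rfl⟩ := mem_span_insert.1 hx
    exact ⟨(c, ⟨w, hw⟩), rfl⟩

end TranslationInvariant

section Paley

variable {F : Type*} [Field F]

theorem paley_adj_add_left {x y : F} (t : F) (h : (paley F).Adj x y) :
    (paley F).Adj (t + x) (t + y) := by
  simpa [paley, add_sub_add_left_eq_sub] using h

theorem paley_adj_add_of_isSquare {g : F} (hg0 : g ≠ 0) (hg : IsSquare g) (x : F) :
    (paley F).Adj x (x + g) := by
  simp [paley, hg0, hg]

end Paley

theorem stmt19 :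
    (∀ (V₁ V₂ : Type) (_ : Fintype V₁) (_ : Fintype V₂)
      (_ : DecidableEq V₁) (_ : DecidableEq V₂)
      (q₀ n : ℕ) (G₁ : SimpleGraph V₁) (G₂ : SimpleGraph V₂)
      (G : SimpleGraph (V₁ × V₂)),
      Fintype.card V₁ = q₀ → 3 ≤ q₀ → Fintype.card V₂ = n →
      (∃ (v : V₁) (w : G₁.Walk v v), w.IsHamiltonianCycle) →
      (∃ (u v : V₂) (p : G₂.Walk u v), p.IsHamiltonian) →
      (G₁ □ G₂) ≤ G →
      (∃ (u v : V₁ × V₂) (p : (G₁ □ G₂).Walk u v), p.IsHamiltonian) →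
      ∃ (u v : V₁ × V₂) (p : G.Walk u v), p.IsHamiltonian) ∧
    (∀ (q₀ n : ℕ) (_ : Fact q₀.Prime), Odd q₀ →
      ∀ (F : Type) (_ : Field F) (_ : Fintype F) (_ : DecidableEq F)
        (_ : Algebra (ZMod q₀) F),
      Fintype.card F = q₀ ^ n → q₀ ^ n % 4 = 1 →
      ∀ (f : Fin (n - 1) → F), LinearIndependent (ZMod q₀) f →
        (∀ j, f j ≠ 0 ∧ IsSquare (f j)) →
      ∀ i, i ≤ n - 1 →
        ∃ (u v : ((Submodule.span (ZMod q₀) (f '' {j | (j : ℕ) < i}) :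
            Submodule (ZMod q₀) F) : Set F))
          (p : ((paley F).induce ((Submodule.span (ZMod q₀) (f '' {j | (j : ℕ) < i}) :
            Submodule (ZMod q₀) F) : Set F)).Walk u v), p.IsHamiltonian) := by
  refine ⟨fun V₁ V₂ _ _ _ _ q₀ n G₁ G₂ G _ _ _ _ _ hle hprod => Traceable.mono hle hprod, ?_⟩
  intro q₀ n _ _ F _ _ _ _ _ _ f hf hsq i hi
  induction i with
  | zero =>
    rw [show f '' {j | (j : ℕ) < 0} = ∅ by simp, Submodule.span_empty, Submodule.bot_coe]
    exact traceable_of_subsingleton _ ⟨0, rfl⟩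
  | succ i ih =>
    have hi' : i < n - 1 := hi
    have hinsert : f '' {j | (j : ℕ) < i + 1} = insert (f ⟨i, hi'⟩) (f '' {j | (j : ℕ) < i}) := by
      rw [← Set.image_insert_eq]
      congr 1
      ext j
      simp only [Set.mem_ofPred_eq, Set.mem_insert_iff, Fin.ext_iff]
      omega
    rw [hinsert]
    exact Traceable.induce_span_insert (fun _ _ => paley_adj_add_left)
      (hf.notMem_span_image (by simp)) (traceable_comap_smul
        (paley_adj_add_of_isSquare (hsq _).1 (hsq _).2)) (ih (by omega))
end
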